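/- arXiv:1708.05902 — 5 statements merged into one kernel-verified Lean document; each statement's English description precedes it below -/
import Mathlib

section
/- Let T be a tree of order at least 3. If the maximum degree Δ(T) is odd and T is not (3^p−2)-regular for any integer p ≥ 2, then χ'_g(T) ≤ Δ(T)+2; otherwise χ'_g(T) ≤ Δ(T)+3. -/
/-!
Root the tree at a vertex `r` of degree at least two and label its edges level by level, going
away from `r`. At a vertex `v` whose parent edge carries `a` and whose parent has weight `W ≠ a`,
the child edges get a set `S` of distinct labels with `a ∉ S`, `a + ∑ S ∉ S` (so `v` differs from
its leaf children) and `a + ∑ S ≠ W`.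

If `|A|` is odd, `A \ {0, a}` contains zero-sum sets of every size `t` with `2 ≤ t ≤ |A| - 3`:
a set closed under negation, or the complement of one together with `0` and a zero-sum triple
through `a`; this gives `Δ + 2` when `Δ` is odd and the tree is not `Δ`-regular, and `Δ + 3` when
`Δ` is even. A `Δ`-regular tree needs child sets of size `|A| - 3` (resp. `|A| - 4`), taken as
complements of three (resp. four) labels containing `a` with sum `∑ A`. For `|A| = Δ + 2` the root
needs some `x` with `3 x ≠ 0`, i.e. `|A|` not a power of `3`; for `|A| = 3 ^ p + 1` the choice
works because `8 ∤ |A|`, so that `y + y = s` has at most four solutions.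
-/

open Finset SimpleGraph

/-- A `𝒢`-twin edge coloring of `G`: a proper edge labeling `f : E(G) → 𝒢` such that
the induced weighted degrees `w(v) = ∑_{u ∈ N(v)} f(uv)` differ on adjacent vertices. -/
def IsTwinEdgeColoring {V : Type} [Fintype V] (G : SimpleGraph V) [DecidableRel G.Adj]
    {A : Type} [AddCommGroup A] (f : Sym2 V → A) : Prop :=
  (∀ u v w : V, G.Adj u v → G.Adj u w → v ≠ w → f s(u, v) ≠ f s(u, w)) ∧
  (∀ u v : V, G.Adj u v →
    ∑ x ∈ G.neighborFinset u, f s(x, u) ≠ ∑ x ∈ G.neighborFinset v, f s(x, v))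

/-- The set of integers `k ≥ 2` such that for every Abelian group `𝒢` of order `k`
there exists a `𝒢`-twin edge coloring of `G`.  The group twin chromatic index
`χ'_g(G)` is the least element of this set. -/
def TwinSet {V : Type} [Fintype V] (G : SimpleGraph V) [DecidableRel G.Adj] : Set ℕ :=
  {k | 2 ≤ k ∧ ∀ (A : Type) [AddCommGroup A] [Fintype A], Fintype.card A = k →
      ∃ f : Sym2 V → A, IsTwinEdgeColoring G f}

/-- A tree is `r`-regular if every non-leaf vertex has degree `r`. -/
def IsRegularTreeDeg {V : Type} [Fintype V] (G : SimpleGraph V) [DecidableRel G.Adj]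
    (r : ℕ) : Prop :=
  ∀ v : V, G.degree v ≠ 1 → G.degree v = r

namespace SimpleGraph

section Rooted

variable {V : Type} {T : SimpleGraph V}

variable (T) in
open Classical in
noncomputable def parent (r v : V) : V :=
  if h : ∃ u, T.Adj u v ∧ T.dist r v = T.dist r u + 1 then h.choose else v

theorem parent_self (r : V) : T.parent r r = r := by
  simp [parent]

namespace IsTree

variable (hT : T.IsTree) {r : V}
include hT

theorem exists_adj_dist_eq_add_one {v : V} (hv : v ≠ r) :
    ∃ u, T.Adj u v ∧ T.dist r v = T.dist r u + 1 := by
  obtain ⟨p, hp⟩ := hT.connected.exists_walk_length_eq_dist r v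
  have hnil : ¬p.Nil := Walk.not_nil_of_ne hv.symm
  refine ⟨p.penultimate, p.adj_penultimate hnil, ?_⟩
  have := dist_le p.dropLast
  rw [Walk.length_dropLast] at this
  have := hT.dist_eq_dist_add_one_of_adj r (p.adj_penultimate hnil)
  omega

-- Both `u₁` and `u₂` are the penultimate vertex of the path from `r` to `v`.
theorem eq_of_adj_of_dist_eq_add_one {v u₁ u₂ : V} (h₁ : T.Adj u₁ v) (h₂ : T.Adj u₂ v)
    (hd₁ : T.dist r v = T.dist r u₁ + 1) (hd₂ : T.dist r v = T.dist r u₂ + 1) : u₁ = u₂ := by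
  classical
  obtain ⟨q, hq, -⟩ := hT.connected.exists_path_of_dist r v
  have key : ∀ u, T.Adj u v → T.dist r v = T.dist r u + 1 → q.penultimate = u := by
    intro u hu hd
    obtain ⟨p, hp, hpl⟩ := hT.connected.exists_path_of_dist r u
    have hvp : v ∉ p.support := fun hv => by
      have := (dist_le (p.takeUntil v hv)).trans (p.length_takeUntil_le_length hv)
      omega
    have huq := hT.isAcyclic.mem_support_of_ne_mem_support_of_adj_of_isPath hq hp hu.symm hvp
    rw [hT.isAcyclic.path_concat hp hq hu huq, Walk.penultimate_concat]
  rw [← key u₁ h₁ hd₁, key u₂ h₂ hd₂]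

theorem parent_spec {v : V} (hv : v ≠ r) :
    T.Adj (T.parent r v) v ∧ T.dist r v = T.dist r (T.parent r v) + 1 := by
  have h := hT.exists_adj_dist_eq_add_one hv
  rw [parent, dif_pos h]
  exact h.choose_spec

theorem eq_parent {u v : V} (h : T.Adj u v) (hd : T.dist r v = T.dist r u + 1) :
    u = T.parent r v := by
  have hv : v ≠ r := by rintro rfl; simp at hd
  exact hT.eq_of_adj_of_dist_eq_add_one h (hT.parent_spec hv).1 hd (hT.parent_spec hv).2

end IsTree

variable [Fintype V] [DecidableRel T.Adj]

variable (T) in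
noncomputable def children (r v : V) : Finset V :=
  {u ∈ T.neighborFinset v | T.dist r u = T.dist r v + 1}

theorem mem_children {r v u : V} :
    u ∈ T.children r v ↔ T.Adj v u ∧ T.dist r u = T.dist r v + 1 := by
  simp [children]

theorem ne_of_mem_children {r v u : V} (h : u ∈ T.children r v) : u ≠ r := by
  rintro rfl
  simp [mem_children] at h

theorem notMem_children_of_dist_le {r v u : V} (h : T.dist r u ≤ T.dist r v) :
    u ∉ T.children r v := fun hu => by
  have := (mem_children.mp hu).2
  omega

theorem dist_le_of_mem_insert_children [DecidableEq V] {r v u : V}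
    (hu : u ∈ insert v (T.children r v)) : T.dist r u ≤ T.dist r v + 1 := by
  rcases mem_insert.mp hu with rfl | hu
  · omega
  · exact (mem_children.mp hu).2.le

namespace IsTree

variable (hT : T.IsTree) {r : V}
include hT

theorem mem_children_parent {v : V} (hv : v ≠ r) : v ∈ T.children r (T.parent r v) :=
  mem_children.mpr ⟨(hT.parent_spec hv).1, (hT.parent_spec hv).2⟩

theorem parent_eq_of_mem_children {u v : V} (h : u ∈ T.children r v) : T.parent r u = v :=
  (hT.eq_parent (mem_children.mp h).1 (mem_children.mp h).2).symm

theorem adj_iff (r : V) {u v : V} :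
    T.Adj v u ↔ u ∈ T.children r v ∨ v ≠ r ∧ u = T.parent r v := by
  refine ⟨fun h => ?_, ?_⟩
  · rcases hT.dist_eq_dist_add_one_of_adj r h with hd | hd
    · have hv : v ≠ r := by rintro rfl; simp at hd
      exact Or.inr ⟨hv, hT.eq_parent h.symm hd⟩
    · exact Or.inl (mem_children.mpr ⟨h, hd⟩)
  · rintro (h | ⟨hv, rfl⟩)
    · exact (mem_children.mp h).1
    · exact (hT.parent_spec hv).1.symm

theorem parent_notMem_children (v : V) : T.parent r v ∉ T.children r v := by
  by_cases hv : v = r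
  · exact notMem_children_of_dist_le (by simp [hv, parent_self])
  · exact notMem_children_of_dist_le (by have := (hT.parent_spec hv).2; omega)

theorem neighborFinset_root : T.neighborFinset r = T.children r r := by
  ext u
  rw [mem_neighborFinset, hT.adj_iff r]
  simp

theorem card_children_root : #(T.children r r) = T.degree r := by
  rw [← card_neighborFinset_eq_degree, hT.neighborFinset_root]

variable [DecidableEq V]

theorem neighborFinset_eq {v : V} (hv : v ≠ r) :
    T.neighborFinset v = insert (T.parent r v) (T.children r v) := by
  ext u
  rw [mem_neighborFinset, hT.adj_iff r, mem_insert]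
  tauto

theorem card_children {v : V} (hv : v ≠ r) : #(T.children r v) = T.degree v - 1 := by
  rw [← card_neighborFinset_eq_degree, hT.neighborFinset_eq hv,
    card_insert_of_notMem (hT.parent_notMem_children v)]
  rfl

theorem dist_le_of_mem_insert_children_parent {v u : V} (hv : v ≠ r)
    (hu : u ∈ insert (T.parent r v) (T.children r (T.parent r v))) :
    T.dist r u ≤ T.dist r v := by
  have := dist_le_of_mem_insert_children hu
  have := (hT.parent_spec hv).2
  omega

end IsTree

end Rooted

end SimpleGraph

section Labels

variable {A : Type*} [AddCommGroup A]

/-- `S` is a set of labels for the `t` edges from a vertex `v` to its children, when `a` is the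
label of the edge from `v` to its parent and `W ≠ a` is the weight of that parent; the weight of
`v` becomes `a + ∑ S`. Every label below the root has to satisfy `P`. -/
def CanLabelChildren (P : A → Prop) (t : ℕ) : Prop :=
  ∀ a W : A, P a → W ≠ a → ∃ S : Finset A, #S = t ∧ (∀ c ∈ S, P c) ∧ a ∉ S ∧
    a + ∑ x ∈ S, x ∉ S ∧ a + ∑ x ∈ S, x ≠ W

def CanLabelRoot (P : A → Prop) (t : ℕ) : Prop :=
  ∃ S : Finset A, #S = t ∧ (∀ c ∈ S, P c) ∧ ∑ x ∈ S, x ∉ S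

theorem canLabelChildren_zero (P : A → Prop) : CanLabelChildren P 0 :=
  fun a _ _ hW => ⟨∅, by simp [hW.symm]⟩

end Labels

namespace SimpleGraph

section Labelling

variable {V : Type} [Fintype V] {T : SimpleGraph V} [DecidableRel T.Adj]
  {A : Type} [AddCommGroup A] {r : V} {P : A → Prop}

-- `g c` is the label of the edge from `c` to its parent; `g r` plays no role.
variable (T) in
noncomputable def edgeLabel (r : V) (g : V → A) : Sym2 V → A :=
  Sym2.lift ⟨fun u v => (if T.dist r u < T.dist r v then g v else 0) +
    (if T.dist r v < T.dist r u then g u else 0), fun _ _ => add_comm _ _⟩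

theorem edgeLabel_of_mem_children {g : V → A} {v c : V} (hc : c ∈ T.children r v) :
    T.edgeLabel r g s(v, c) = g c := by
  simp [edgeLabel, (mem_children.mp hc).2]

variable [DecidableEq V]

theorem IsTree.edgeLabel_of_adj (hT : T.IsTree) (g : V → A) {u x : V} (h : T.Adj u x) :
    T.edgeLabel r g s(u, x) = if x ∈ T.children r u then g x else g u := by
  split_ifs with hx
  · exact edgeLabel_of_mem_children hx
  · obtain ⟨hu, rfl⟩ := ((hT.adj_iff r).mp h).resolve_left hx
    rw [Sym2.eq_swap, edgeLabel_of_mem_children (hT.mem_children_parent hu)]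

variable (T) in
noncomputable def rootedWeight (r : V) (g : V → A) (v : V) : A :=
  (if v = r then 0 else g v) + ∑ c ∈ T.children r v, g c

variable (T) in
structure IsGoodAt (r : V) (P : A → Prop) (g : V → A) (v : V) : Prop where
  injOn : Set.InjOn g (T.children r v)
  prop : ∀ c ∈ T.children r v, P (g c)
  weight_ne : ∀ c ∈ T.children r v, T.rootedWeight r g v ≠ g c
  ne_parent : v ≠ r → ∀ c ∈ T.children r v, g c ≠ g v
  weight_ne_parent : v ≠ r → T.rootedWeight r g v ≠ T.rootedWeight r g (T.parent r v)

theorem IsTree.sum_edgeLabel (hT : T.IsTree) (g : V → A) (v : V) :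
    ∑ x ∈ T.neighborFinset v, T.edgeLabel r g s(x, v) = T.rootedWeight r g v := by
  have hc : ∀ c ∈ T.children r v, T.edgeLabel r g s(c, v) = g c := fun c hc => by
    rw [Sym2.eq_swap, edgeLabel_of_mem_children hc]
  by_cases hv : v = r
  · subst hv
    rw [hT.neighborFinset_root, rootedWeight, if_pos rfl, zero_add, sum_congr rfl hc]
  · rw [hT.neighborFinset_eq hv, sum_insert (hT.parent_notMem_children v), rootedWeight,
      if_neg hv, edgeLabel_of_mem_children (hT.mem_children_parent hv), sum_congr rfl hc]

theorem IsTree.isTwinEdgeColoring_edgeLabel (hT : T.IsTree) {g : V → A}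
    (hg : ∀ v, T.IsGoodAt r P g v) : IsTwinEdgeColoring T (T.edgeLabel r g) := by
  refine ⟨fun u v w hv hw hvw => ?_, fun u v h => ?_⟩
  · rw [hT.edgeLabel_of_adj g hv, hT.edgeLabel_of_adj g hw]
    rcases (hT.adj_iff r).mp hv with hv' | ⟨hu, rfl⟩ <;>
      rcases (hT.adj_iff r).mp hw with hw' | ⟨hu, rfl⟩
    · rw [if_pos hv', if_pos hw']
      exact fun h => hvw ((hg u).injOn hv' hw' h)
    · rw [if_pos hv', if_neg (hT.parent_notMem_children u)]
      exact (hg u).ne_parent hu v hv'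
    · rw [if_neg (hT.parent_notMem_children u), if_pos hw']
      exact ((hg u).ne_parent hu w hw').symm
    · exact absurd rfl hvw
  · rw [hT.sum_edgeLabel, hT.sum_edgeLabel]
    rcases (hT.adj_iff r).mp h with hv | ⟨hu, rfl⟩
    · have := (hg v).weight_ne_parent (ne_of_mem_children hv)
      rw [hT.parent_eq_of_mem_children hv] at this
      exact this.symm
    · exact (hg u).weight_ne_parent hu

theorem rootedWeight_congr {g g' : V → A} {v : V}
    (h : ∀ u ∈ insert v (T.children r v), g u = g' u) :
    T.rootedWeight r g v = T.rootedWeight r g' v := by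
  rw [rootedWeight, rootedWeight, h v (mem_insert_self _ _),
    sum_congr rfl fun u hu => h u (mem_insert_of_mem hu)]

theorem IsGoodAt.congr {g g' : V → A} {v : V}
    (hv : ∀ u ∈ insert v (T.children r v), g u = g' u)
    (hp : v ≠ r → ∀ u ∈ insert (T.parent r v) (T.children r (T.parent r v)), g u = g' u)
    (h : T.IsGoodAt r P g v) : T.IsGoodAt r P g' v := by
  have hc : ∀ c ∈ T.children r v, g c = g' c := fun c hc => hv c (mem_insert_of_mem hc)
  have hw := rootedWeight_congr hv
  refine ⟨h.injOn.congr hc, fun c hc' => ?_, fun c hc' => ?_, fun hvr c hc' => ?_, fun hvr => ?_⟩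
  · rw [← hc c hc']; exact h.prop c hc'
  · rw [← hc c hc', ← hw]; exact h.weight_ne c hc'
  · rw [← hc c hc', ← hv v (mem_insert_self _ _)]; exact h.ne_parent hvr c hc'
  · rw [← hw, ← rootedWeight_congr (hp hvr)]; exact h.weight_ne_parent hvr

variable (hroot : CanLabelRoot P (T.degree r))
  (hstep : ∀ v, v ≠ r → CanLabelChildren P (T.degree v - 1))
include hroot hstep

theorem IsTree.exists_finset_card_children (hT : T.IsTree) (g : V → A) {v : V}
    (hv : v ≠ r → P (g v) ∧ T.rootedWeight r g (T.parent r v) ≠ g v) :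
    ∃ S : Finset A, #S = #(T.children r v) ∧ (∀ c ∈ S, P c) ∧ (v ≠ r → g v ∉ S) ∧
      (if v = r then 0 else g v) + ∑ x ∈ S, x ∉ S ∧
      (v ≠ r → g v + ∑ x ∈ S, x ≠ T.rootedWeight r g (T.parent r v)) := by
  by_cases hvr : v = r
  · subst hvr
    obtain ⟨S, hS, hPS, hsum⟩ := hroot
    exact ⟨S, by rw [hS, hT.card_children_root], hPS, by simp, by simpa using hsum, by simp⟩
  · obtain ⟨S, hS, hPS, haS, hwS, hwW⟩ := hstep v hvr (g v) _ (hv hvr).1 (hv hvr).2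
    exact ⟨S, by rw [hS, hT.card_children hvr], hPS, fun _ => haS, by simpa [hvr] using hwS,
      fun _ => hwW⟩

theorem IsTree.exists_isGoodAt_piecewise (hT : T.IsTree) (g : V → A) {v : V}
    (hv : v ≠ r → P (g v) ∧ T.rootedWeight r g (T.parent r v) ≠ g v) :
    ∃ e : V → A, T.IsGoodAt r P ((T.children r v).piecewise e g) v := by
  obtain ⟨S, hS, hPS, haS, hwS, hwW⟩ := hT.exists_finset_card_children hroot hstep g hv
  obtain ⟨e, he⟩ := (T.children r v).finite_toSet.exists_bijOn_of_encard_eq (t := (S : Set A))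
    (by simp [Set.encard_coe_eq_coe_finsetCard, hS])
  refine ⟨e, ?_⟩
  set g' := (T.children r v).piecewise e g
  have hg'v : g' v = g v := piecewise_eq_of_notMem _ _ _ (notMem_children_of_dist_le le_rfl)
  have hg'c : ∀ c ∈ T.children r v, g' c = e c := fun c hc => piecewise_eq_of_mem _ _ _ hc
  have hw : T.rootedWeight r g' v = (if v = r then 0 else g v) + ∑ x ∈ S, x := by
    rw [rootedWeight, hg'v, sum_congr rfl hg'c]
    exact congrArg _ (sum_nbij e he.mapsTo he.injOn he.surjOn fun _ _ => rfl)
  refine ⟨he.injOn.congr fun c hc => (hg'c c hc).symm, fun c hc => ?_, fun c hc => ?_,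
    fun hvr c hc => ?_, fun hvr => ?_⟩
  · rw [hg'c c hc]; exact hPS _ (he.mapsTo hc)
  · rw [hg'c c hc, hw]; exact fun h => hwS (h ▸ he.mapsTo hc)
  · rw [hg'c c hc, hg'v]; exact fun h => haS hvr (h ▸ he.mapsTo hc)
  · have hparent : T.rootedWeight r g (T.parent r v) = T.rootedWeight r g' (T.parent r v) :=
      rootedWeight_congr fun u hu => (piecewise_eq_of_notMem _ _ _ <|
        notMem_children_of_dist_le (hT.dist_le_of_mem_insert_children_parent hvr hu)).symm
    rw [hw, ← hparent, if_neg hvr]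
    exact hwW hvr

theorem IsTree.exists_isGoodAt_of_dist_lt (hT : T.IsTree) :
    ∀ n : ℕ, ∃ g : V → A, ∀ v, T.dist r v < n → T.IsGoodAt r P g v
  | 0 => ⟨0, fun _ hv => absurd hv (Nat.not_lt_zero _)⟩
  | n + 1 => by
    obtain ⟨g, hg⟩ := hT.exists_isGoodAt_of_dist_lt n
    have hlevel : ∀ v, ∃ e : V → A, T.dist r v = n →
        T.IsGoodAt r P ((T.children r v).piecewise e g) v := by
      intro v
      by_cases hv : T.dist r v = n
      · refine (hT.exists_isGoodAt_piecewise hroot hstep g fun hvr => ?_).imp fun _ he _ => he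
        have hp := hT.mem_children_parent hvr
        have hgp := hg (T.parent r v) (by have := (hT.parent_spec hvr).2; omega)
        exact ⟨hgp.prop v hp, hgp.weight_ne v hp⟩
      · exact ⟨g, fun h => absurd h hv⟩
    choose e he using hlevel
    set g' : V → A := fun u => if T.dist r u = n + 1 then e (T.parent r u) u else g u
    have hg' : ∀ u, T.dist r u ≤ n → g u = g' u := fun u hu => by
      simp [g', show T.dist r u ≠ n + 1 by omega]
    refine ⟨g', fun v hv => ?_⟩
    rcases Nat.lt_succ_iff_lt_or_eq.mp hv with hv | hv
    · refine (hg v hv).congr (fun u hu => hg' u ?_) fun hvr u hu => hg' u ?_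
      · have := dist_le_of_mem_insert_children hu; omega
      · have := hT.dist_le_of_mem_insert_children_parent hvr hu; omega
    · refine (he v hv).congr (fun u hu => ?_) fun hvr u hu => ?_
      · rcases mem_insert.mp hu with rfl | hu
        · rw [piecewise_eq_of_notMem _ _ _ (notMem_children_of_dist_le le_rfl), hg' u hv.le]
        · simp [g', piecewise_eq_of_mem _ _ _ hu, (mem_children.mp hu).2, hv,
            hT.parent_eq_of_mem_children hu]
      · have hdist := hT.dist_le_of_mem_insert_children_parent hvr hu
        rw [piecewise_eq_of_notMem _ _ _ (notMem_children_of_dist_le hdist), hg' u (by omega)]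

theorem IsTree.exists_isTwinEdgeColoring (hT : T.IsTree) :
    ∃ f : Sym2 V → A, IsTwinEdgeColoring T f := by
  obtain ⟨g, hg⟩ := hT.exists_isGoodAt_of_dist_lt hroot hstep (univ.sup (T.dist r) + 1)
  exact ⟨_, hT.isTwinEdgeColoring_edgeLabel fun v =>
    hg v (Nat.lt_succ_of_le (le_sup (mem_univ v)))⟩

end Labelling

end SimpleGraph

namespace AddCommGroup

variable {A : Type*} [AddCommGroup A] [Fintype A]

theorem card_filter_add_self_eq_le_card_filter_add_self_eq_zero [DecidableEq A] (s : A) :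
    #{y : A | y + y = s} ≤ #{y : A | y + y = 0} := by
  let double : A →+ A := nsmulAddMonoidHom 2
  by_cases hs : s ∈ Set.range double
  · have := AddMonoidHom.card_fiber_eq_of_mem_range double hs ⟨0, map_zero double⟩
    simpa [double, two_nsmul] using this.le
  · have : #{y : A | y + y = s} = 0 := by
      rw [card_eq_zero, filter_eq_empty_iff]
      exact fun y _ hy => hs ⟨y, by simpa [double, two_nsmul] using hy⟩
    omega

theorem exists_card_eq_prime_pow_of_forall_nsmul_eq_zero {p : ℕ} [Fact p.Prime]
    (h : ∀ x : A, p • x = 0) : ∃ n, Fintype.card A = p ^ n := by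
  let := AddCommGroup.zmodModule h
  exact ⟨_, by rw [Module.card_eq_pow_finrank (K := ZMod p), ZMod.card]⟩

theorem card_filter_add_self_eq_le_four [DecidableEq A] (h8 : ¬ 8 ∣ Fintype.card A) (s : A) :
    #{y : A | y + y = s} ≤ 4 := by
  refine (card_filter_add_self_eq_le_card_filter_add_self_eq_zero s).trans ?_
  let K : AddSubgroup A := (nsmulAddMonoidHom 2 : A →+ A).ker
  have hK : #{y : A | y + y = 0} = Fintype.card K := by
    rw [← Fintype.card_subtype]; congr! 2; simp [K, two_nsmul]
  have : Fact (Nat.Prime 2) := ⟨Nat.prime_two⟩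
  obtain ⟨n, hn⟩ := exists_card_eq_prime_pow_of_forall_nsmul_eq_zero (A := K) (p := 2)
    fun x => Subtype.ext (by simpa using AddMonoidHom.mem_ker.mp x.2)
  have hdvd : 2 ^ n ∣ Fintype.card A := by
    simpa [← hn, Nat.card_eq_fintype_card] using K.card_addSubgroup_dvd_card
  have : n ≤ 2 := by
    by_contra! hn3
    exact h8 ((pow_dvd_pow 2 hn3).trans hdvd)
  rw [hK, hn]
  calc 2 ^ n ≤ 2 ^ 2 := Nat.pow_le_pow_right (by norm_num) this
    _ = 4 := by norm_num

theorem exists_ne_notMem_add_eq [DecidableEq A] (s : A) (F : Finset A)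
    (h : 2 * #F + #{y : A | y + y = s} < Fintype.card A) :
    ∃ x y, x ≠ y ∧ x ∉ F ∧ y ∉ F ∧ x + y = s := by
  have hcard : #(F ∪ F.image (s - ·) ∪ ({y : A | y + y = s} : Finset A)) < #(univ : Finset A) :=
    by grw [card_union_le, card_union_le, card_image_le, card_univ]; omega
  obtain ⟨x, -, hx⟩ := exists_mem_notMem_of_card_lt_card hcard
  simp only [mem_union, mem_image, mem_filter, mem_univ, true_and, not_or, not_exists,
    not_and] at hx
  obtain ⟨⟨hxF, hsxF⟩, hxx⟩ := hx
  refine ⟨x, s - x, fun h => hxx ?_, hxF, fun h => hsxF _ h (sub_sub_cancel s x),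
    add_sub_cancel x s⟩
  nth_rw 2 [h]
  exact add_sub_cancel x s

section OddOrder

variable (hA : Odd (Fintype.card A))
include hA

theorem add_self_injective_of_odd_card : Function.Injective (fun x : A => x + x) := by
  have hc : (Nat.card A).Coprime 2 := by rwa [Nat.card_eq_fintype_card, Nat.coprime_two_right]
  intro x y h
  apply (nsmulCoprime hc).injective
  simpa [two_nsmul] using h

theorem card_filter_add_self_eq_le_one [DecidableEq A] (s : A) : #{y : A | y + y = s} ≤ 1 :=
  card_le_one.mpr fun _ hx _ hy =>
    add_self_injective_of_odd_card hA ((mem_filter.mp hx).2.trans (mem_filter.mp hy).2.symm)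

theorem neg_ne_self_of_odd_card {x : A} (hx : x ≠ 0) : -x ≠ x := fun h =>
  hx <| add_self_injective_of_odd_card hA <| calc
    x + x = -x + x := by rw [h]
    _ = 0 + 0 := by simp

theorem sum_eq_zero_of_neg_mem {S : Finset A} (hS : ∀ x ∈ S, -x ∈ S) : ∑ x ∈ S, x = 0 :=
  sum_involution (fun x _ => -x) (fun x _ => add_neg_cancel x)
    (fun _ _ hx => neg_ne_self_of_odd_card hA hx) hS (fun x _ => neg_neg x)

theorem sum_univ_eq_zero_of_odd_card : ∑ x : A, x = 0 :=
  sum_eq_zero_of_neg_mem hA fun x _ => mem_univ (-x)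

open Pointwise in
theorem exists_neg_mem_disjoint [DecidableEq A] (F : Finset A) :
    ∀ m : ℕ, 2 * m + 2 * #F < Fintype.card A →
      ∃ S : Finset A, #S = 2 * m ∧ (∀ x ∈ S, -x ∈ S) ∧ (0 : A) ∉ S ∧ Disjoint S F
  | 0, _ => ⟨∅, by simp⟩
  | m + 1, hm => by
    obtain ⟨S, hS, hneg, h0, hSF⟩ := exists_neg_mem_disjoint F m (by omega)
    have hcard : #(insert 0 (S ∪ F ∪ -F)) < #(univ : Finset A) := by
      grw [card_insert_le, card_union_le, card_union_le, card_neg, card_univ]; omega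
    obtain ⟨x, -, hx⟩ := exists_mem_notMem_of_card_lt_card hcard
    simp only [mem_insert, mem_union, mem_neg', not_or] at hx
    obtain ⟨hx0, ⟨hxS, hxF⟩, hnxF⟩ := hx
    have hnxS : -x ∉ S := fun h => hxS (by simpa using hneg _ h)
    have hxnx : x ∉ insert (-x) S := by
      simp [hxS, (neg_ne_self_of_odd_card hA hx0).symm]
    refine ⟨insert x (insert (-x) S), ?_, ?_, ?_, ?_⟩
    · rw [card_insert_of_notMem hxnx, card_insert_of_notMem hnxS, hS]; ring
    · simp only [mem_insert]
      rintro y (rfl | rfl | hy)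
      · simp
      · simp
      · exact Or.inr (Or.inr (hneg y hy))
    · simp [hx0, Ne.symm hx0, h0]
    · simp [hxF, hSF, hnxF]

theorem exists_sum_eq_zero [DecidableEq A] {a : A} (ha : a ≠ 0) {t : ℕ} (ht : 2 ≤ t)
    (htA : t + 3 ≤ Fintype.card A) :
    ∃ S : Finset A, #S = t ∧ (0 : A) ∉ S ∧ a ∉ S ∧ ∑ x ∈ S, x = 0 := by
  rcases Nat.even_or_odd' t with ⟨m, rfl | rfl⟩
  · obtain ⟨S, hS, hneg, h0, hSa⟩ := exists_neg_mem_disjoint hA {a} m (by simp; omega)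
    exact ⟨S, hS, h0, disjoint_singleton_right.mp hSa, sum_eq_zero_of_neg_mem hA hneg⟩
  -- for odd `t`, take the complement of `{0} ∪ P ∪ {a, x, y}` with `a + x + y = 0` and `P = -P`
  have h02 : #({0, a} : Finset A) ≤ 2 := card_le_two
  obtain ⟨x, y, hxy, hx, hy, hsum⟩ := exists_ne_notMem_add_eq (-a) {0, a}
    (by have := card_filter_add_self_eq_le_one hA (-a); omega)
  simp only [mem_insert, mem_singleton, not_or] at hx hy
  have hT3 : #({a, x, y} : Finset A) = 3 := by
    rw [card_insert_of_notMem (by simp [Ne.symm hx.2, Ne.symm hy.2]),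
      card_insert_of_notMem (by simpa using hxy), card_singleton]
  obtain ⟨n, hn⟩ := id hA
  obtain ⟨P, hP, hneg, hP0, hTP⟩ := exists_neg_mem_disjoint hA {a, x, y} (n - m - 2) (by omega)
  set E : Finset A := insert 0 (P ∪ {a, x, y})
  have h0E : (0 : A) ∉ P ∪ {a, x, y} := by
    simp [hP0, Ne.symm ha, Ne.symm hx.1, Ne.symm hy.1]
  have hE : #E = 2 * (n - m - 2) + 4 := by
    rw [card_insert_of_notMem h0E, card_union_of_disjoint hTP, hT3, hP]
  have hEsum : ∑ z ∈ E, z = 0 := by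
    rw [sum_insert h0E, sum_union hTP, sum_eq_zero_of_neg_mem hA hneg,
      sum_insert (by simp [Ne.symm hx.2, Ne.symm hy.2]), sum_pair hxy, hsum]
    simp
  refine ⟨univ \ E, by rw [card_univ_sdiff, hE]; omega, by simp [E], by simp [E], ?_⟩
  rw [sum_sdiff_eq_sub (subset_univ E), sum_univ_eq_zero_of_odd_card hA, hEsum, sub_zero]

end OddOrder

end AddCommGroup

section Oracles

variable {A : Type*} [AddCommGroup A] [Fintype A] [DecidableEq A]

theorem canLabelChildren_of_forall_exists_sum_eq {t : ℕ}
    (h : ∀ a : A, ∃ E : Finset A, a ∈ E ∧ #E + t = Fintype.card A ∧ ∑ x ∈ E, x = ∑ x : A, x) :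
    CanLabelChildren (fun _ : A => True) t := by
  intro a W _ hW
  obtain ⟨E, haE, hE, hsum⟩ := h a
  have hS : ∑ x ∈ univ \ E, x = 0 := by rw [sum_sdiff_eq_sub (subset_univ E), hsum, sub_self]
  exact ⟨univ \ E, by rw [card_univ_sdiff]; omega, fun _ _ => trivial, by simpa using haE,
    by simpa [hS] using haE, by simpa [hS] using hW.symm⟩

theorem canLabelRoot_of_sum_sub_mem {t : ℕ} {E : Finset A} (hE : #E + t = Fintype.card A)
    (hsum : ∑ x : A, x - ∑ x ∈ E, x ∈ E) : CanLabelRoot (fun _ : A => True) t :=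
  ⟨univ \ E, by rw [card_univ_sdiff]; omega, fun _ _ => trivial,
    by simpa [sum_sdiff_eq_sub (subset_univ E)] using hsum⟩

section OddOrder

variable (hA : Odd (Fintype.card A))
include hA

theorem canLabelChildren_ne_zero_of_odd_card {t : ℕ} (ht : t + 3 ≤ Fintype.card A) :
    CanLabelChildren (fun x : A => x ≠ 0) t := by
  intro a W ha hW
  rcases Nat.lt_or_ge t 2 with ht2 | ht2
  · interval_cases t
    · exact canLabelChildren_zero _ a W ha hW
    · have hcard : #({0, a, W - a} : Finset A) < #(univ : Finset A) := by
        grw [card_le_three, card_univ]; omega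
      obtain ⟨x, -, hx⟩ := exists_mem_notMem_of_card_lt_card hcard
      simp only [mem_insert, mem_singleton, not_or] at hx
      refine ⟨{x}, card_singleton x, by simpa using hx.1, by simpa using Ne.symm hx.2.1, ?_, ?_⟩
      · simpa using ha
      · rw [sum_singleton]
        exact fun h => hx.2.2 (eq_sub_of_add_eq' h)
  · obtain ⟨S, hS, h0, haS, hsum⟩ := AddCommGroup.exists_sum_eq_zero hA ha ht2 ht
    exact ⟨S, hS, fun c hc h => h0 (h ▸ hc), haS, by simpa [hsum] using haS,
      by simpa [hsum] using hW.symm⟩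

theorem canLabelRoot_ne_zero_of_odd_card {t : ℕ} (ht : 2 ≤ t) (htA : t + 3 ≤ Fintype.card A) :
    CanLabelRoot (fun x : A => x ≠ 0) t := by
  have : Nontrivial A := Fintype.one_lt_card_iff_nontrivial.mp (by omega)
  obtain ⟨a, ha⟩ := exists_ne (0 : A)
  obtain ⟨S, hS, h0, -, hsum⟩ := AddCommGroup.exists_sum_eq_zero hA ha ht htA
  exact ⟨S, hS, fun c hc h => h0 (h ▸ hc), by rwa [hsum]⟩

theorem canLabelChildren_card_sub_three_of_odd_card (hA5 : 5 ≤ Fintype.card A) :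
    CanLabelChildren (fun _ : A => True) (Fintype.card A - 3) := by
  refine canLabelChildren_of_forall_exists_sum_eq fun a => ?_
  obtain ⟨x, y, hxy, hx, hy, hsum⟩ := AddCommGroup.exists_ne_notMem_add_eq (-a) {a}
    (by have := AddCommGroup.card_filter_add_self_eq_le_one hA (-a); simp; omega)
  simp only [mem_singleton] at hx hy
  have haxy : a ∉ ({x, y} : Finset A) := by simp [Ne.symm hx, Ne.symm hy]
  refine ⟨{a, x, y}, by simp, ?_, ?_⟩
  · rw [card_insert_of_notMem haxy, card_pair hxy]; omega
  · rw [AddCommGroup.sum_univ_eq_zero_of_odd_card hA, sum_insert haxy, sum_pair hxy, hsum,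
      add_neg_cancel]

theorem canLabelRoot_card_sub_two_of_odd_card {x : A} (hx : x + x + x ≠ 0) :
    CanLabelRoot (fun _ : A => True) (Fintype.card A - 2) := by
  have hne : x ≠ -(x + x) := fun h => hx (by rw [add_assoc]; exact eq_neg_iff_add_eq_zero.mp h)
  refine canLabelRoot_of_sum_sub_mem (E := {x, -(x + x)}) ?_ ?_
  · have := card_le_univ ({x, -(x + x)} : Finset A)
    rw [card_pair hne] at this ⊢; omega
  · rw [AddCommGroup.sum_univ_eq_zero_of_odd_card hA, sum_pair hne]
    simp

end OddOrder

section NotEightDvd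

variable (h8 : ¬ 8 ∣ Fintype.card A)
include h8

theorem canLabelChildren_card_sub_four_of_not_eight_dvd (hA : 9 ≤ Fintype.card A) :
    CanLabelChildren (fun _ : A => True) (Fintype.card A - 4) := by
  refine canLabelChildren_of_forall_exists_sum_eq fun a => ?_
  have : Nontrivial A := Fintype.one_lt_card_iff_nontrivial.mp (by omega)
  obtain ⟨x, hxa⟩ := exists_ne a
  obtain ⟨y, z, hyz, hy, hz, hsum⟩ := AddCommGroup.exists_ne_notMem_add_eq
    (∑ u : A, u - a - x) {a, x}
    (by have := AddCommGroup.card_filter_add_self_eq_le_four h8 (∑ u : A, u - a - x)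
        have : #({a, x} : Finset A) ≤ 2 := card_le_two
        omega)
  simp only [mem_insert, mem_singleton, not_or] at hy hz
  have hxyz : x ∉ ({y, z} : Finset A) := by simp [Ne.symm hy.2, Ne.symm hz.2]
  have hayz : a ∉ ({x, y, z} : Finset A) := by simp [Ne.symm hxa, Ne.symm hy.1, Ne.symm hz.1]
  refine ⟨{a, x, y, z}, by simp, ?_, ?_⟩
  · rw [card_insert_of_notMem hayz, card_insert_of_notMem hxyz, card_pair hyz]; omega
  · rw [sum_insert hayz, sum_insert hxyz, sum_pair hyz, hsum]
    abel

theorem canLabelRoot_card_sub_three_of_not_eight_dvd (hA : 7 ≤ Fintype.card A) :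
    CanLabelRoot (fun _ : A => True) (Fintype.card A - 3) := by
  obtain ⟨y, z, hyz, hy, hz, hsum⟩ := AddCommGroup.exists_ne_notMem_add_eq (∑ u : A, u) {0}
    (by have := AddCommGroup.card_filter_add_self_eq_le_four h8 (∑ u : A, u); simp; omega)
  simp only [mem_singleton] at hy hz
  have h0yz : (0 : A) ∉ ({y, z} : Finset A) := by simp [Ne.symm hy, Ne.symm hz]
  refine canLabelRoot_of_sum_sub_mem (E := {0, y, z}) ?_ ?_
  · rw [card_insert_of_notMem h0yz, card_pair hyz]; omega
  · rw [sum_insert h0yz, sum_pair hyz, hsum]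
    simp

end NotEightDvd

end Oracles

theorem Nat.not_eight_dvd_three_pow_add_one (q : ℕ) : ¬ 8 ∣ 3 ^ q + 1 := by
  obtain ⟨m, rfl | rfl⟩ := Nat.even_or_odd' q <;>
    simp [Nat.dvd_iff_mod_eq_zero, Nat.add_mod, Nat.mul_mod, Nat.pow_mod, pow_succ, pow_mul]

theorem IsRegularTreeDeg.canLabelChildren_degree_sub_one {V : Type} [Fintype V]
    {T : SimpleGraph V} [DecidableRel T.Adj] {A : Type*} [AddCommGroup A] {P : A → Prop} {d : ℕ}
    (hreg : IsRegularTreeDeg T d) (h : CanLabelChildren P (d - 1)) (v : V) :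
    CanLabelChildren P (T.degree v - 1) := by
  by_cases hv : T.degree v = 1
  · rw [hv]; exact canLabelChildren_zero P
  · rw [hreg v hv]; exact h

namespace SimpleGraph

variable {V : Type} [Fintype V] {T : SimpleGraph V} [DecidableRel T.Adj]

theorem IsTree.two_le_maxDegree (hT : T.IsTree) (h : 3 ≤ Fintype.card V) : 2 ≤ T.maxDegree := by
  classical
  by_contra! hΔ
  have hsum : ∑ v, T.degree v ≤ ∑ _v : V, 1 :=
    sum_le_sum fun v _ => by have := T.degree_le_maxDegree v; omega
  rw [sum_degrees_eq_twice_card_edges, sum_const, card_univ, smul_eq_mul, mul_one] at hsum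
  have := hT.card_edgeFinset
  omega

theorem IsTree.mem_twinSet_of_odd {k : ℕ} (hT : T.IsTree) (hk : Odd k) (hΔ : T.maxDegree + 2 ≤ k)
    {r : V} (hr : 2 ≤ T.degree r) (hrk : T.degree r + 3 ≤ k) : k ∈ TwinSet T := by
  classical
  refine ⟨by omega, fun A _ _ hA => ?_⟩
  subst hA
  refine hT.exists_isTwinEdgeColoring (P := fun x : A => x ≠ 0)
    (canLabelRoot_ne_zero_of_odd_card hk hr hrk) fun v _ => ?_
  exact canLabelChildren_ne_zero_of_odd_card hk (by have := T.degree_le_maxDegree v; omega)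

theorem IsTree.mem_twinSet_of_isRegularTreeDeg_of_odd {k : ℕ} (hT : T.IsTree) (hk : Odd k)
    (hk5 : 5 ≤ k) (hreg : IsRegularTreeDeg T (k - 2)) {r : V} (hr : T.degree r = k - 2)
    (h3 : ¬ ∃ n, k = 3 ^ n) : k ∈ TwinSet T := by
  classical
  refine ⟨by omega, fun A _ _ hA => ?_⟩
  subst hA
  obtain ⟨x, hx⟩ : ∃ x : A, x + x + x ≠ 0 := by
    by_contra! h
    have : Fact (Nat.Prime 3) := ⟨Nat.prime_three⟩
    exact h3 (AddCommGroup.exists_card_eq_prime_pow_of_forall_nsmul_eq_zero fun x => by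
      rw [succ_nsmul, two_nsmul]; exact h x)
  refine hT.exists_isTwinEdgeColoring (r := r)
    (by rw [hr]; exact canLabelRoot_card_sub_two_of_odd_card hk hx)
    fun v _ => hreg.canLabelChildren_degree_sub_one ?_ v
  rw [Nat.sub_sub]
  exact canLabelChildren_card_sub_three_of_odd_card hk hk5

theorem IsTree.mem_twinSet_of_isRegularTreeDeg_of_not_eight_dvd {k : ℕ} (hT : T.IsTree)
    (h8 : ¬ 8 ∣ k) (hk9 : 9 ≤ k) (hreg : IsRegularTreeDeg T (k - 3)) {r : V}
    (hr : T.degree r = k - 3) : k ∈ TwinSet T := by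
  classical
  refine ⟨by omega, fun A _ _ hA => ?_⟩
  subst hA
  refine hT.exists_isTwinEdgeColoring (r := r)
    (by rw [hr]; exact canLabelRoot_card_sub_three_of_not_eight_dvd h8 (by omega))
    fun v _ => hreg.canLabelChildren_degree_sub_one ?_ v
  rw [Nat.sub_sub]
  exact canLabelChildren_card_sub_four_of_not_eight_dvd h8 hk9

theorem IsTree.maxDegree_add_two_mem_twinSet (hT : T.IsTree) (hcard : 3 ≤ Fintype.card V)
    (hodd : Odd T.maxDegree) (hnreg : ¬ ∃ p : ℕ, 2 ≤ p ∧ IsRegularTreeDeg T (3 ^ p - 2)) :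
    T.maxDegree + 2 ∈ TwinSet T := by
  have hk : Odd (T.maxDegree + 2) := hodd.add_even even_two
  have hΔ3 : 3 ≤ T.maxDegree := by
    obtain ⟨j, hj⟩ := hodd; have := hT.two_le_maxDegree hcard; omega
  by_cases hreg : IsRegularTreeDeg T T.maxDegree
  · have : Nonempty V := hT.connected.nonempty
    obtain ⟨m, hm⟩ := T.exists_maximal_degree_vertex
    refine hT.mem_twinSet_of_isRegularTreeDeg_of_odd hk (by omega) (by simpa using hreg)
      (r := m) (by omega) fun ⟨n, hn⟩ => hnreg ⟨n, ?_, fun v hv => by rw [hreg v hv]; omega⟩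
    by_contra! hn1
    interval_cases n <;> omega
  · obtain ⟨v, hv1, hvΔ⟩ : ∃ v, T.degree v ≠ 1 ∧ T.degree v ≠ T.maxDegree := by
      simpa [IsRegularTreeDeg] using hreg
    have : Nontrivial V := Fintype.one_lt_card_iff_nontrivial.mp (by omega)
    have := hT.preconnected.degree_pos_of_nontrivial v
    have := T.degree_le_maxDegree v
    exact hT.mem_twinSet_of_odd hk le_rfl (r := v) (by omega) (by omega)

end SimpleGraph

/-- If `T` is a tree of order at least `3`, then `χ'_g(T) ≤ Δ(T) + 2` if `Δ(T)` is odd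
and `T` is not `(3^p - 2)`-regular for some integer `p ≥ 2`, and `χ'_g(T) ≤ Δ(T) + 3`
otherwise. -/
theorem tree_groupTwinChromaticIndex_le {V : Type} [Fintype V] (T : SimpleGraph V)
    [DecidableRel T.Adj] (hT : T.IsTree) (hcard : 3 ≤ Fintype.card V) :
    ((Odd T.maxDegree ∧ ¬ ∃ p : ℕ, 2 ≤ p ∧ IsRegularTreeDeg T (3 ^ p - 2)) →
      ∃ k ∈ TwinSet T, k ≤ T.maxDegree + 2) ∧
    (∃ k ∈ TwinSet T, k ≤ T.maxDegree + 3) := by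
  have hΔ := hT.two_le_maxDegree hcard
  refine ⟨fun h => ⟨_, hT.maxDegree_add_two_mem_twinSet hcard h.1 h.2, le_rfl⟩, ?_⟩
  by_cases h : Odd T.maxDegree ∧ ¬ ∃ p : ℕ, 2 ≤ p ∧ IsRegularTreeDeg T (3 ^ p - 2)
  · exact ⟨_, hT.maxDegree_add_two_mem_twinSet hcard h.1 h.2, by omega⟩
  have : Nonempty V := hT.connected.nonempty
  obtain ⟨m, hm⟩ := T.exists_maximal_degree_vertex
  refine ⟨T.maxDegree + 3, ?_, le_rfl⟩
  rcases not_and_or.mp h with heven | hreg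
  · have hk : Odd (T.maxDegree + 3) := (Nat.not_odd_iff_even.mp heven).add_odd (by decide)
    exact hT.mem_twinSet_of_odd hk (by omega) (r := m) (by omega) (by omega)
  · obtain ⟨p, hp, hreg⟩ := not_not.mp hreg
    have hΔp : T.maxDegree = 3 ^ p - 2 := hm ▸ hreg m (by omega)
    have h9 : 3 ^ 2 ≤ 3 ^ p := Nat.pow_le_pow_right (by norm_num) hp
    refine hT.mem_twinSet_of_isRegularTreeDeg_of_not_eight_dvd ?_ (by omega)
      (by rwa [Nat.add_sub_cancel, hΔp]) (r := m) (by omega)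
    rw [show T.maxDegree + 3 = 3 ^ p + 1 by omega]
    exact Nat.not_eight_dvd_three_pow_add_one p
end

section
/- If T is a regular tree of order at least 7 whose maximum degree satisfies Δ(T) = 3^{2p+1} − 2 for some positive integer p, then χ'_g(T) ≥ Δ(T) + 3. -/
open Finset SimpleGraph

/-- In a tree on at least 3 vertices there are no two adjacent degree-1 vertices. -/
lemma no_adj_leaves_aux {V : Type} [Fintype V] (T : SimpleGraph V) [DecidableRel T.Adj]
    (hT : T.IsTree) (hcard : 3 ≤ Fintype.card V) {x y : V} (hxy : T.Adj x y)
    (hx : T.degree x = 1) (hy : T.degree y = 1) : False := by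
  classical
  have hnx : T.neighborFinset x = {y} := by
    obtain ⟨a, ha⟩ := Finset.card_eq_one.mp
      ((T.card_neighborFinset_eq_degree x).trans hx)
    have : y ∈ T.neighborFinset x := (T.mem_neighborFinset x y).mpr hxy
    rw [ha] at this ⊢
    rw [Finset.mem_singleton] at this
    rw [this]
  have hny : T.neighborFinset y = {x} := by
    obtain ⟨a, ha⟩ := Finset.card_eq_one.mp
      ((T.card_neighborFinset_eq_degree y).trans hy)
    have : x ∈ T.neighborFinset y := (T.mem_neighborFinset y x).mpr hxy.symm
    rw [ha] at this ⊢
    rw [Finset.mem_singleton] at this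
    rw [this]
  have step : ∀ z w : V, T.Adj z w → (z = x ∨ z = y) → (w = x ∨ w = y) := by
    rintro z w hzw (rfl | rfl)
    · right
      have : w ∈ T.neighborFinset z := (T.mem_neighborFinset z w).mpr hzw
      rw [hnx, Finset.mem_singleton] at this; exact this
    · left
      have : w ∈ T.neighborFinset z := (T.mem_neighborFinset z w).mpr hzw
      rw [hny, Finset.mem_singleton] at this; exact this
  have key : ∀ (u v : V) (_ : T.Walk u v), (u = x ∨ u = y) → (v = x ∨ v = y) := by
    intro u v p
    induction p with
    | nil => exact id
    | cons h q ih => intro hu; exact ih (step _ _ h hu)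
  have hall : ∀ z : V, z = x ∨ z = y := by
    intro z
    obtain ⟨p⟩ := hT.isConnected.preconnected x z
    exact key x z p (Or.inl rfl)
  have hsub : (Finset.univ : Finset V) ⊆ {x, y} := by
    intro z _
    rcases hall z with rfl | rfl <;> simp
  have : Fintype.card V ≤ 2 := by
    calc Fintype.card V = (Finset.univ : Finset V).card := (Finset.card_univ).symm
      _ ≤ ({x, y} : Finset V).card := Finset.card_le_card hsub
      _ ≤ 2 := Finset.card_insert_le x {y} |>.trans (by simp)
  omega

/-- The key structural lemma: if the group `A` satisfies that `σ - ∑ M ∉ M` for every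
subset `M` of the "right" cardinality, then no `A`-twin edge coloring of a regular tree
exists. -/
lemma key_lemma {V : Type} [Fintype V] (T : SimpleGraph V) [DecidableRel T.Adj]
    (hT : T.IsTree) (hcard : 7 ≤ Fintype.card V)
    (hreg : IsRegularTreeDeg T T.maxDegree) (hΔ3 : 3 ≤ T.maxDegree)
    {A : Type} [AddCommGroup A] [Fintype A] [DecidableEq A]
    (HA : ∀ M : Finset A, M.card + T.maxDegree = Fintype.card A →
      (∑ a : A, a) - (∑ a ∈ M, a) ∉ M)
    (f : Sym2 V → A) (hf : IsTwinEdgeColoring T f) : False := by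
  classical
  obtain ⟨hprop, htwin⟩ := hf
  set Δ := T.maxDegree with hΔdef
  set w : V → A := fun v => ∑ x ∈ T.neighborFinset v, f s(x, v) with hw
  -- injectivity of labels around a vertex
  have hinj : ∀ v : V, Set.InjOn (fun x => f s(x, v)) (T.neighborFinset v) := by
    intro v x hx y hy hxy2
    by_contra hne
    refine hprop v x y ((T.mem_neighborFinset v x).mp hx) ((T.mem_neighborFinset v y).mp hy) hne ?_
    simpa only [Sym2.eq_swap] using hxy2
  -- for every internal vertex, its weight is the label of an edge to another internal vertex
  have hwin : ∀ v : V, T.degree v ≠ 1 →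
      ∃ x, x ∈ T.neighborFinset v ∧ f s(x, v) = w v ∧ T.degree x ≠ 1 := by
    intro v hv
    have hdeg : T.degree v = Δ := hreg v hv
    set img := (T.neighborFinset v).image (fun x => f s(x, v)) with himg
    have hcardimg : img.card = Δ := by
      rw [himg, Finset.card_image_of_injOn (hinj v), T.card_neighborFinset_eq_degree, hdeg]
    have hsum : ∑ a ∈ img, a = w v := by
      rw [himg, Finset.sum_image (fun x hx y hy h => hinj v hx hy h)]
    have hΔle : Δ ≤ Fintype.card A := by
      rw [← hcardimg, ← Finset.card_univ]; exact Finset.card_le_univ img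
    set M := (Finset.univ : Finset A) \ img with hM
    have hMcard : M.card + Δ = Fintype.card A := by
      rw [hM, Finset.card_sdiff_of_subset (Finset.subset_univ _), hcardimg, Finset.card_univ]
      omega
    have hsubs : (∑ a : A, a) - (∑ a ∈ M, a) = w v := by
      have h1 : (∑ a ∈ M, a) + (∑ a ∈ img, a) = ∑ a : A, a :=
        Finset.sum_sdiff (Finset.subset_univ img)
      rw [← hsum, ← h1]; abel
    have hnotM := HA M hMcard
    rw [hsubs] at hnotM
    have hwimg : w v ∈ img := by
      by_contra hco
      exact hnotM (Finset.mem_sdiff.mpr ⟨Finset.mem_univ _, hco⟩)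
    obtain ⟨x, hxmem, hxval⟩ := Finset.mem_image.mp hwimg
    refine ⟨x, hxmem, hxval, ?_⟩
    intro hx1
    have hadj : T.Adj v x := (T.mem_neighborFinset v x).mp hxmem
    have hnx : T.neighborFinset x = {v} := by
      obtain ⟨a, ha⟩ := Finset.card_eq_one.mp ((T.card_neighborFinset_eq_degree x).trans hx1)
      have : v ∈ T.neighborFinset x := (T.mem_neighborFinset x v).mpr hadj.symm
      rw [ha] at this ⊢
      rw [Finset.mem_singleton] at this
      rw [this]
    have hwx : w x = f s(x, v) := by
      rw [hw]; simp only [hnx, Finset.sum_singleton, Sym2.eq_swap]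
    exact htwin v x hadj (show w v = w x by rw [hwx, hxval])
  choose xv hxv1 hxv2 hxv3 using hwin
  -- internal vertices and internal edges
  set I := Finset.univ.filter (fun v => T.degree v ≠ 1) with hI
  set L := Finset.univ.filter (fun v => T.degree v = 1) with hL
  have hIL : L.card + I.card = Fintype.card V := by
    rw [hL, hI, ← Finset.card_univ]
    exact Finset.card_filter_add_card_filter_not (fun v => T.degree v = 1)
  set E := T.edgeFinset with hE
  set P : Sym2 V → Prop := fun e => ∀ v ∈ e, T.degree v ≠ 1 with hP
  set Eint := E.filter P with hEint
  set Eleaf := E.filter (fun e => ¬ P e) with hEleaf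
  have hEcard : E.card + 1 = Fintype.card V := hT.card_edgeFinset
  have hsplit : Eint.card + Eleaf.card = E.card :=
    Finset.card_filter_add_card_filter_not P
  -- leaves inject into non-internal edges
  have hleafnbr : ∀ x : V, T.degree x = 1 → ∃ y, T.neighborFinset x = {y} :=
    fun x hx => Finset.card_eq_one.mp ((T.card_neighborFinset_eq_degree x).trans hx)
  choose nb hnb using hleafnbr
  have hLle : L.card ≤ Eleaf.card := by
    apply Finset.card_le_card_of_injOn
      (fun x => if h : T.degree x = 1 then s(x, nb x h) else s(x, x))
    · intro x hxL
      have hx1 : T.degree x = 1 := (Finset.mem_filter.mp hxL).2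
      simp only [dif_pos hx1]
      have hadj : T.Adj x (nb x hx1) := by
        rw [← T.mem_neighborFinset, hnb x hx1]; exact Finset.mem_singleton_self _
      refine Finset.mem_filter.mpr ⟨?_, ?_⟩
      · rw [hE, mem_edgeFinset]; exact hadj
      · intro hPe
        exact hPe x (Sym2.mem_mk_left _ _) hx1
    · intro x hxL y hyL hxyeq
      have hx1 : T.degree x = 1 := (Finset.mem_filter.mp hxL).2
      have hy1 : T.degree y = 1 := (Finset.mem_filter.mp hyL).2
      simp only [dif_pos hx1, dif_pos hy1] at hxyeq
      rcases Sym2.eq_iff.mp hxyeq with ⟨h1, _⟩ | ⟨h1, h2⟩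
      · exact h1
      · exfalso
        have hadj : T.Adj x y := by
          rw [← h2, ← T.mem_neighborFinset x, hnb x hx1]
          exact Finset.mem_singleton_self _
        exact no_adj_leaves_aux T hT (by omega) hadj hx1 hy1
  -- at least one internal vertex exists
  have hIpos : 0 < I.card := by
    have : Nonempty V := Fintype.card_pos_iff.mp (by omega)
    obtain ⟨v, hv⟩ := T.exists_maximal_degree_vertex
    refine Finset.card_pos.mpr ⟨v, Finset.mem_filter.mpr ⟨Finset.mem_univ _, ?_⟩⟩
    rw [← hv]; omega
  have hcount : Eint.card < I.card := by omega
  -- the selection map from internal vertices to internal edges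
  set g : V → Sym2 V := fun v => if h : T.degree v ≠ 1 then s(v, xv v h) else s(v, v) with hg
  have hmaps : ∀ v ∈ I, g v ∈ Eint := by
    intro v hv
    have hv1 : T.degree v ≠ 1 := (Finset.mem_filter.mp hv).2
    have hadj : T.Adj v (xv v hv1) := (T.mem_neighborFinset v _).mp (hxv1 v hv1)
    simp only [hg, dif_pos hv1]
    refine Finset.mem_filter.mpr ⟨?_, ?_⟩
    · rw [hE, mem_edgeFinset]; exact hadj
    · intro z hz
      rcases Sym2.mem_iff.mp hz with rfl | rfl
      · exact hv1
      · exact hxv3 v hv1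
  obtain ⟨v, hvI, v', hv'I, hne, heq⟩ :=
    Finset.exists_ne_map_eq_of_card_lt_of_maps_to hcount hmaps
  have hv1 : T.degree v ≠ 1 := (Finset.mem_filter.mp hvI).2
  have hv'1 : T.degree v' ≠ 1 := (Finset.mem_filter.mp hv'I).2
  simp only [hg, dif_pos hv1, dif_pos hv'1] at heq
  rcases Sym2.eq_iff.mp heq with ⟨h1, _⟩ | ⟨h1, h2⟩
  · exact hne h1
  · have hadj : T.Adj v v' := h2 ▸ (T.mem_neighborFinset v _).mp (hxv1 v hv1)
    apply htwin v v' hadj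
    show w v = w v'
    rw [← hxv2 v hv1, ← hxv2 v' hv'1, h2, ← h1, Sym2.eq_swap]

/-- The first component of the sum of all elements of `ZMod 2 × ZMod q`, `q` odd. -/
lemma sum_fst_prod (q : ℕ) [NeZero q] (hq : q % 2 = 1) :
    (∑ a : ZMod 2 × ZMod q, a).1 = 1 := by
  rw [Prod.fst_sum]
  rw [Fintype.sum_prod_type]
  simp only [Finset.sum_const, Finset.card_univ, ZMod.card]
  rw [← Finset.smul_sum]
  have h1 : (∑ x : ZMod 2, x) = 1 := by decide
  rw [h1, nsmul_eq_mul, mul_one, ← ZMod.natCast_mod q 2, hq]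
  rfl

/-- In a finite abelian group of exponent 3, the sum of all elements vanishes. -/
lemma exp3_sum_zero (A : Type) [AddCommGroup A] [Fintype A] (h3 : ∀ a : A, a + a + a = 0) :
    (∑ a : A, a) = 0 := by
  have hneg : -(∑ a : A, a) = ∑ a : A, a := by
    rw [← Finset.sum_neg_distrib]
    exact Equiv.sum_comp (Equiv.neg A) id
  have h2 : (∑ a : A, a) + (∑ a : A, a) = 0 := by
    nth_rewrite 1 [← hneg]
    exact neg_add_cancel _
  have h3' : (∑ a : A, a) + (∑ a : A, a) + (∑ a : A, a) = 0 := by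
    rw [← Finset.sum_add_distrib, ← Finset.sum_add_distrib]
    exact Finset.sum_eq_zero (fun a _ => h3 a)
  rw [h2, zero_add] at h3'
  exact h3'

/-- If `T` is a regular tree of order at least `7` such that `Δ(T) = 3^(2p+1) - 2` for
some positive integer `p`, then `χ'_g(T) ≥ Δ(T) + 3`. -/
theorem groupTwinChromaticIndex_ge {V : Type} [Fintype V] (T : SimpleGraph V)
    [DecidableRel T.Adj] (hT : T.IsTree) (hcard : 7 ≤ Fintype.card V)
    (hreg : IsRegularTreeDeg T T.maxDegree)
    (p : ℕ) (hp : 1 ≤ p) (hΔ : T.maxDegree = 3 ^ (2 * p + 1) - 2) :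
    ∀ k ∈ TwinSet T, T.maxDegree + 3 ≤ k := by
  intro k hk
  obtain ⟨hk2, hall⟩ := hk
  by_contra hlt
  push_neg at hlt
  have hN : 27 ≤ 3 ^ (2 * p + 1) := by
    calc (27 : ℕ) = 3 ^ 3 := by norm_num
      _ ≤ 3 ^ (2 * p + 1) := Nat.pow_le_pow_right (by norm_num) (by omega)
  have hΔ3 : 3 ≤ T.maxDegree := by omega
  rcases (show k ≤ T.maxDegree ∨ k = T.maxDegree + 1 ∨ k = T.maxDegree + 2 by omega)
    with hcase | hcase | hcase
  · -- k ≤ Δ : use ZMod k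
    haveI : NeZero k := ⟨by omega⟩
    obtain ⟨f, hf⟩ := hall (ZMod k) (ZMod.card k)
    refine key_lemma T hT hcard hreg hΔ3 ?_ f hf
    intro M hM
    rw [ZMod.card] at hM
    have hM0 : M.card = 0 := by omega
    rw [Finset.card_eq_zero.mp hM0]
    exact Finset.notMem_empty _
  · -- k = Δ + 1 : use ZMod 2 × ZMod q with q odd
    obtain ⟨r, hr⟩ : Odd (3 ^ (2 * p + 1)) := Odd.pow ⟨1, by norm_num⟩
    have hq2 : 2 * r = T.maxDegree + 1 := by omega
    have h9 : (9 : ℕ) ^ p % 4 = 1 := by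
      have h := (show (9 : ℕ) ≡ 1 [MOD 4] by decide).pow p
      simpa [Nat.ModEq, one_pow] using h
    have hNe : 3 ^ (2 * p + 1) = 9 ^ p * 3 := by
      rw [pow_succ, pow_mul]; norm_num
    have hqodd : r % 2 = 1 := by omega
    haveI : NeZero r := ⟨by omega⟩
    have hcardA : Fintype.card (ZMod 2 × ZMod r) = k := by
      rw [Fintype.card_prod, ZMod.card, ZMod.card]
      omega
    obtain ⟨f, hf⟩ := hall (ZMod 2 × ZMod r) hcardA
    refine key_lemma T hT hcard hreg hΔ3 ?_ f hf
    intro M hM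
    have hM1 : M.card = 1 := by omega
    obtain ⟨m, rfl⟩ := Finset.card_eq_one.mp hM1
    rw [Finset.sum_singleton, Finset.mem_singleton]
    intro hcontra
    have hσ : (∑ a : ZMod 2 × ZMod r, a) = m + m := sub_eq_iff_eq_add.mp hcontra
    have h1 := congrArg Prod.fst hσ
    rw [sum_fst_prod r hqodd, Prod.fst_add] at h1
    have h2 : m.1 + m.1 = 0 := by
      have : ∀ z : ZMod 2, z + z = 0 := by decide
      exact this m.1
    rw [h2] at h1
    exact one_ne_zero h1
  · -- k = Δ + 2 : use (Fin (2p+1)) → ZMod 3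
    have h3 : ∀ a : Fin (2 * p + 1) → ZMod 3, a + a + a = 0 := by
      intro a; funext i
      have h := (show ∀ x : ZMod 3, x + x + x = 0 by decide) (a i)
      simpa using h
    have hσ := exp3_sum_zero _ h3
    have hcardA : Fintype.card (Fin (2 * p + 1) → ZMod 3) = k := by
      rw [Fintype.card_fun]
      simp only [ZMod.card, Fintype.card_fin]
      omega
    obtain ⟨f, hf⟩ := hall (Fin (2 * p + 1) → ZMod 3) hcardA
    refine key_lemma T hT hcard hreg hΔ3 ?_ f hf
    intro M hM
    have hM2 : M.card = 2 := by omega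
    obtain ⟨a, b, hab, rfl⟩ := Finset.card_eq_two.mp hM2
    rw [hσ, Finset.sum_pair hab, zero_sub]
    intro hmem
    rcases Finset.mem_insert.mp hmem with heq | heq
    · have h1 : a + b = -a := neg_eq_iff_eq_neg.mp heq
      have h2 : a + a + b = a + a + a := by
        rw [h3 a, add_assoc, h1]
        exact add_neg_cancel a
      exact hab (add_left_cancel h2).symm
    · rw [Finset.mem_singleton] at heq
      have h1 : a + b = -b := neg_eq_iff_eq_neg.mp heq
      have h2 : b + b + a = b + b + b := by
        rw [h3 b, add_assoc, add_comm b a, h1]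
        exact add_neg_cancel b
      exact hab (add_left_cancel h2)
end

section
/- Let q ≥ 2 be an integer and let T be a (3^q − 2)-regular tree of order at least 7. Then T admits no (ℤ_3)^q-twin edge coloring, i.e. there is no proper edge labeling f : E(T) → (ℤ_3)^q such that the induced sums w(v) = Σ_{u ∈ N(v)} f(uv) are distinct on every pair of adjacent vertices. -/
open Finset SimpleGraph

/-!
In a group `A` of exponent `3` the elements sum to `0`. At a vertex `v` of degree `|A| - 2` the
labels miss exactly two elements `a ≠ b`, so `w(v) = -(a + b)`, which is neither `a` nor `b`
(`-(a + b) = a` would give `b = -2a = a`): some edge `v u` is labeled `w(v)`. The twin condition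
makes `u` a non-leaf (a leaf has `w(u) = f(vu) = w(v)`) and forbids the edge at `u` labeled `w(u)`
to be `u v`. Iterating `v ↦ u` therefore gives a non-backtracking walk, which in a forest is a
path, and a finite forest has no arbitrarily long paths.
-/

section ExponentThree

variable {A : Type*} [AddCommGroup A] [Fintype A]

theorem sum_univ_eq_zero_of_three_nsmul (h3 : ∀ a : A, 3 • a = 0) : ∑ a : A, a = 0 := by
  set s := ∑ a : A, a
  have hneg : -s = s := by
    rw [← Finset.sum_neg_distrib]
    exact Equiv.sum_comp (Equiv.neg A) id
  calc s = 3 • s + -s - s := by abel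
    _ = 0 := by rw [h3, hneg]; abel

theorem sum_mem_of_card_compl_eq_two [DecidableEq A] (h3 : ∀ a : A, 3 • a = 0) {S : Finset A}
    (hS : Sᶜ.card = 2) : ∑ x ∈ S, x ∈ S := by
  obtain ⟨a, b, hab, hSc⟩ := Finset.card_eq_two.1 hS
  have hsum : ∑ x ∈ S, x + (a + b) = 0 := by
    rw [← sum_univ_eq_zero_of_three_nsmul h3, ← sum_add_sum_compl S, hSc, sum_pair hab]
  by_contra hnot
  have hmem : ∑ x ∈ S, x ∈ Sᶜ := mem_compl.2 hnot
  rw [hSc, mem_insert, mem_singleton] at hmem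
  apply hab
  rw [← sub_eq_zero]
  rcases hmem with ha | hb
  · calc a - b = 3 • a - ∑ x ∈ S, x - (a + b) := by rw [ha]; abel
      _ = 0 := by rw [h3, ← sub_add_eq_sub_sub, hsum, sub_zero]
  · calc a - b = ∑ x ∈ S, x + (a + b) - 3 • b := by rw [hb]; abel
      _ = 0 := by rw [h3, hsum, sub_zero]

end ExponentThree

namespace SimpleGraph

variable {V : Type*} {G : SimpleGraph V} {g : V → V}

def iterateWalk (hadj : ∀ v, G.Adj v (g v)) : (n : ℕ) → (v : V) → G.Walk v (g^[n] v)
  | 0, _ => Walk.nil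
  | n + 1, v => Walk.cons (hadj v) (iterateWalk hadj n (g v))

@[simp]
theorem length_iterateWalk (hadj : ∀ v, G.Adj v (g v)) (n : ℕ) (v : V) :
    (iterateWalk hadj n v).length = n := by
  induction n generalizing v with
  | zero => rfl
  | succ n ih => simp [iterateWalk, ih]

theorem edges_iterateWalk_succ (hadj : ∀ v, G.Adj v (g v)) (n : ℕ) (v : V) :
    (iterateWalk hadj (n + 1) v).edges = s(v, g v) :: (iterateWalk hadj n (g v)).edges :=
  rfl

theorem isChain_edges_iterateWalk (hadj : ∀ v, G.Adj v (g v)) (hback : ∀ v, g (g v) ≠ v)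
    (n : ℕ) (v : V) : (iterateWalk hadj n v).edges.IsChain (· ≠ ·) := by
  induction n generalizing v with
  | zero => simp [iterateWalk]
  | succ n ih =>
    rw [edges_iterateWalk_succ]
    refine List.isChain_cons.2 ⟨fun e he => ?_, ih (g v)⟩
    cases n with
    | zero => simp [iterateWalk] at he
    | succ n =>
      rw [edges_iterateWalk_succ, List.head?_cons, Option.mem_some_iff] at he
      rw [← he, ne_eq, Sym2.eq_iff]
      rintro (⟨hv, -⟩ | ⟨hv, -⟩)
      · exact (hadj v).ne hv
      · exact hback v hv.symm

theorem IsAcyclic.exists_apply_apply_eq_self [Fintype V] [Nonempty V] (hG : G.IsAcyclic)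
    (hadj : ∀ v, G.Adj v (g v)) : ∃ v, g (g v) = v := by
  by_contra! hback
  inhabit V
  have hpath := (hG.isPath_iff_isChain _).2
    (isChain_edges_iterateWalk hadj hback (Fintype.card V) default)
  simpa using hpath.length_lt

end SimpleGraph

section TwinEdgeColoring

variable {V : Type} [Fintype V] {G : SimpleGraph V} [DecidableRel G.Adj]
  {A : Type} [AddCommGroup A] {f : Sym2 V → A}

variable (G f) in
def weightedDegree (v : V) : A :=
  ∑ x ∈ G.neighborFinset v, f s(x, v)

theorem weightedDegree_eq_of_degree_eq_one {u v : V} (hv : G.degree v = 1) (hadj : G.Adj u v) :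
    weightedDegree G f v = f s(u, v) := by
  obtain ⟨x, hx⟩ := card_eq_one.1 ((G.card_neighborFinset_eq_degree v).trans hv)
  have hux : u = x := mem_singleton.1 (hx ▸ (G.mem_neighborFinset v u).2 hadj.symm)
  rw [weightedDegree, hx, sum_singleton, hux]

theorem IsTwinEdgeColoring.degree_ne_one_of_label_eq {u v : V} (hf : IsTwinEdgeColoring G f)
    (hadj : G.Adj u v) (hlabel : f s(u, v) = weightedDegree G f u) : G.degree v ≠ 1 := fun hv =>
  hf.2 u v hadj (hlabel.symm.trans (weightedDegree_eq_of_degree_eq_one hv hadj).symm)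

theorem IsTwinEdgeColoring.exists_label_eq_weightedDegree [Fintype A]
    (hf : IsTwinEdgeColoring G f) (h3 : ∀ a : A, 3 • a = 0) {v : V}
    (hdeg : G.degree v + 2 = Fintype.card A) :
    ∃ u, G.Adj v u ∧ f s(v, u) = weightedDegree G f v := by
  classical
  have hinj : Set.InjOn (fun u => f s(v, u)) (G.neighborFinset v) := fun x hx y hy hxy => by
    by_contra hne
    exact hf.1 v x y ((G.mem_neighborFinset v x).1 hx) ((G.mem_neighborFinset v y).1 hy) hne hxy
  set S := (G.neighborFinset v).image fun u => f s(v, u)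
  have hS : Sᶜ.card = 2 := by
    rw [card_compl, card_image_of_injOn hinj, card_neighborFinset_eq_degree]
    omega
  have hw : weightedDegree G f v = ∑ x ∈ S, x := by
    rw [sum_image hinj, weightedDegree]
    simp_rw [Sym2.eq_swap]
  obtain ⟨u, hu, hlabel⟩ := mem_image.1 (hw ▸ sum_mem_of_card_compl_eq_two h3 hS)
  exact ⟨u, (G.mem_neighborFinset v u).1 hu, hlabel⟩

theorem SimpleGraph.IsAcyclic.not_isTwinEdgeColoring [Fintype A] [Nonempty V]
    (hG : G.IsAcyclic) (h3 : ∀ a : A, 3 • a = 0)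
    (hdeg : ∀ v, G.degree v ≠ 1 → G.degree v + 2 = Fintype.card A) :
    ¬ IsTwinEdgeColoring G f := by
  intro hf
  choose! next hadj hlabel using fun v (hv : G.degree v ≠ 1) =>
    hf.exists_label_eq_weightedDegree h3 (hdeg v hv)
  have hnext : ∀ v, G.degree v ≠ 1 → G.degree (next v) ≠ 1 := fun v hv =>
    hf.degree_ne_one_of_label_eq (hadj v hv) (hlabel v hv)
  obtain ⟨v₀, hv₀⟩ : ∃ v, G.degree v ≠ 1 := by
    inhabit V
    by_contra! hleaf
    obtain ⟨u, hu⟩ := (G.degree_pos_iff_exists_adj default).1 (by rw [hleaf]; exact one_pos)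
    refine hf.degree_ne_one_of_label_eq hu ?_ (hleaf u)
    rw [weightedDegree_eq_of_degree_eq_one (hleaf default) hu.symm, Sym2.eq_swap]
  have : Nonempty {v | G.degree v ≠ 1} := ⟨⟨v₀, hv₀⟩⟩
  obtain ⟨⟨v, hv⟩, hreturn⟩ := (hG.induce {v | G.degree v ≠ 1}).exists_apply_apply_eq_self
    (g := fun v => ⟨next v, hnext v v.2⟩) fun v => induce_adj.2 (hadj v v.2)
  have hback : next (next v) = v := congrArg Subtype.val hreturn
  apply hf.2 v (next v) (hadj v hv)
  calc weightedDegree G f v = f s(v, next v) := (hlabel v hv).symm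
    _ = f s(next v, next (next v)) := by rw [hback, Sym2.eq_swap]
    _ = weightedDegree G f (next v) := hlabel (next v) (hnext v hv)

end TwinEdgeColoring

theorem no_twin_coloring_of_regular_tree_general {V : Type} [Fintype V] (T : SimpleGraph V)
    [DecidableRel T.Adj] (hT : T.IsTree)
    (q : ℕ) (hq : 2 ≤ q) (hreg : IsRegularTreeDeg T (3 ^ q - 2)) :
    ¬ ∃ f : Sym2 V → (Fin q → ZMod 3), IsTwinEdgeColoring T f := by
  rintro ⟨f, hf⟩
  have h3 : ∀ a : Fin q → ZMod 3, 3 • a = 0 := fun a => by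
    ext i
    rw [Pi.smul_apply, nsmul_eq_mul, ZMod.natCast_self, zero_mul, Pi.zero_apply]
  have hcard : Fintype.card (Fin q → ZMod 3) = 3 ^ q := by simp
  have hpow : 2 ≤ 3 ^ q := le_trans (by norm_num) (Nat.pow_le_pow_right (by norm_num) hq)
  have := hT.connected.nonempty
  refine hT.isAcyclic.not_isTwinEdgeColoring h3 (fun v hv => ?_) hf
  rw [hreg v hv, hcard]
  omega

/-- For an integer `q ≥ 2`, a `(3^q - 2)`-regular tree of order at least `7` admits
no `(ℤ₃)^q`-twin edge coloring. -/
theorem no_twin_coloring_of_regular_tree {V : Type} [Fintype V] (T : SimpleGraph V)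
    [DecidableRel T.Adj] (hT : T.IsTree) (hcard : 7 ≤ Fintype.card V)
    (q : ℕ) (hq : 2 ≤ q) (hreg : IsRegularTreeDeg T (3 ^ q - 2)) :
    ¬ ∃ f : Sym2 V → (Fin q → ZMod 3), IsTwinEdgeColoring T f :=
  no_twin_coloring_of_regular_tree_general T hT q hq hreg
end

section
/- Let 𝒢 be a finite Abelian group of order at least 6 having at most one involution. For any elements a, b ∈ 𝒢 with 2b = 0 and a ≠ b, there exist elements x, y ∈ 𝒢 with x ≠ y, {a,b} ∩ {x,y} = ∅, and x + y = b − a. -/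
/-- Let `𝒢` be a finite Abelian group of order at least `6` having at most one
involution.  For any `a b ∈ 𝒢` with `2b = 0` and `a ≠ b` there exist elements
`x ≠ y` with `{a, b} ∩ {x, y} = ∅` and `x + y = b - a`. -/
theorem exists_pair_sum_eq {G : Type} [AddCommGroup G] [Fintype G]
    (hcard : 6 ≤ Fintype.card G)
    (hinv : ∀ i j : G, i ≠ 0 → i + i = 0 → j ≠ 0 → j + j = 0 → i = j)
    (a b : G) (hb : b + b = 0) (hab : a ≠ b) :
    ∃ x y : G, x ≠ y ∧ ({a, b} ∩ {x, y} : Set G) = ∅ ∧ x + y = b - a := by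
  classical
  have key : ∃ x : G,
      x ∉ ({a, b, b - a - a, b - a - b} : Finset G) ∧ x + x ≠ b - a := by
    by_contra hk
    push_neg at hk
    set bad : Finset G := {a, b, b - a - a, b - a - b} with hbaddef
    set R : Finset G := Finset.univ \ bad with hRdef
    have hmemR : ∀ x ∈ R, x + x = b - a := fun x hx =>
      hk x (Finset.mem_sdiff.mp hx).2
    -- card bad ≤ 4
    have hbad4 : bad.card ≤ 4 := by
      have h1 := Finset.card_insert_le a ({b, b - a - a, b - a - b} : Finset G)
      have h2 := Finset.card_insert_le b ({b - a - a, b - a - b} : Finset G)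
      have h3 := Finset.card_insert_le (b - a - a) ({b - a - b} : Finset G)
      have h4 : ({b - a - b} : Finset G).card = 1 := Finset.card_singleton _
      simp only [hbaddef]
      omega
    have hRcard : R.card = Fintype.card G - bad.card := by
      rw [hRdef, Finset.card_sdiff_of_subset (Finset.subset_univ bad), Finset.card_univ]
    -- R has at most 2 elements
    have hR2 : R.card ≤ 2 := by
      by_contra hgt
      push_neg at hgt
      obtain ⟨x, y, z, hx, hy, hz, hxy, hxz, hyz⟩ :=
        Finset.two_lt_card_iff.mp hgt
      have exy : y - x ≠ 0 := sub_ne_zero.mpr hxy.symm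
      have exz : z - x ≠ 0 := sub_ne_zero.mpr hxz.symm
      have e2 : (y - x) + (y - x) = 0 := by
        have h1 := hmemR x hx
        have h2 := hmemR y hy
        have e : (y - x) + (y - x) = (y + y) - (x + x) := by abel
        rw [h1, h2, sub_self] at e
        exact e
      have e3 : (z - x) + (z - x) = 0 := by
        have h1 := hmemR x hx
        have h2 := hmemR z hz
        have e : (z - x) + (z - x) = (z + z) - (x + x) := by abel
        rw [h1, h2, sub_self] at e
        exact e
      have := hinv _ _ exy e2 exz e3
      exact hyz (sub_left_injective this)
    have hRge : 2 ≤ R.card := by omega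
    have hR2' : R.card = 2 := le_antisymm hR2 hRge
    have hcard6 : Fintype.card G = 6 := by omega
    have hbadcard : bad.card = 4 := by omega
    -- distinctness of the four bad elements
    obtain ⟨t, t', htt', hRpair⟩ := Finset.card_eq_two.mp hR2'
    -- elements of R are solutions of 2x = b - a
    have ht : t + t = b - a := hmemR t (by rw [hRpair]; simp)
    have ht' : t' + t' = b - a := hmemR t' (by rw [hRpair]; simp)
    have hi0 : t' - t ≠ 0 := sub_ne_zero.mpr htt'.symm
    have hi2 : (t' - t) + (t' - t) = 0 := by
      have e : (t' - t) + (t' - t) = (t' + t') - (t + t) := by abel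
      rw [ht, ht', sub_self] at e
      exact e
    -- distinctness of the four bad elements
    have card3 : ∀ x y z : G, ({x, y, z} : Finset G).card ≤ 3 := by
      intro x y z
      have h1 := Finset.card_insert_le x ({y, z} : Finset G)
      have h2 := Finset.card_insert_le y ({z} : Finset G)
      have h3 : ({z} : Finset G).card = 1 := Finset.card_singleton _
      omega
    have hdac : a ≠ b - a - a := by
      intro h
      have hsub : bad ⊆ {a, b, b - a - b} := by
        rw [hbaddef, ← h]
        intro w hw
        simp only [Finset.mem_insert, Finset.mem_singleton] at hw ⊢
        tauto
      have := Finset.card_le_card hsub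
      have := card3 a b (b - a - b)
      omega
    have hdad : a ≠ b - a - b := by
      intro h
      have hsub : bad ⊆ {a, b, b - a - a} := by
        rw [hbaddef, ← h]
        intro w hw
        simp only [Finset.mem_insert, Finset.mem_singleton] at hw ⊢
        tauto
      have := Finset.card_le_card hsub
      have := card3 a b (b - a - a)
      omega
    have hdbc : b ≠ b - a - a := by
      intro h
      have hsub : bad ⊆ {a, b, b - a - b} := by
        rw [hbaddef, ← h]
        intro w hw
        simp only [Finset.mem_insert, Finset.mem_singleton] at hw ⊢
        tauto
      have := Finset.card_le_card hsub
      have := card3 a b (b - a - b)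
      omega
    have hdbd : b ≠ b - a - b := by
      intro h
      have hsub : bad ⊆ {a, b, b - a - a} := by
        rw [hbaddef, ← h]
        intro w hw
        simp only [Finset.mem_insert, Finset.mem_singleton] at hw ⊢
        tauto
      have := Finset.card_le_card hsub
      have := card3 a b (b - a - a)
      omega
    have hdcd : b - a - a ≠ b - a - b := by
      intro h
      have hsub : bad ⊆ {a, b, b - a - b} := by
        rw [hbaddef, h]
        intro w hw
        simp only [Finset.mem_insert, Finset.mem_singleton] at hw ⊢
        tauto
      have := Finset.card_le_card hsub
      have := card3 a b (b - a - b)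
      omega
    have h2a0 : a + a ≠ 0 := by
      intro h0
      apply hdad
      have e : a - (b - a - b) = a + a := by abel
      rw [h0] at e
      exact sub_eq_zero.mp e
    -- total sum of the group
    have hS2 : (∑ i : G, i) + (∑ i : G, i) = 0 := by
      have h : ∑ i : G, -i = ∑ i : G, i := by
        have := (Equiv.neg G).sum_comp (fun x => x) (s := Finset.univ)
        simpa using this
      rw [Finset.sum_neg_distrib] at h
      exact add_eq_zero_iff_eq_neg.mpr h.symm
    have hsumbad : ∑ x ∈ bad, x = a + (b + ((b - a - a) + (b - a - b))) := by
      rw [hbaddef]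
      rw [Finset.sum_insert (by
          simp only [Finset.mem_insert, Finset.mem_singleton, not_or]
          exact ⟨hab, hdac, hdad⟩),
        Finset.sum_insert (by
          simp only [Finset.mem_insert, Finset.mem_singleton, not_or]
          exact ⟨hdbc, hdbd⟩),
        Finset.sum_insert (by
          simp only [Finset.mem_singleton]
          exact hdcd), Finset.sum_singleton]
    have hsumR : ∑ x ∈ R, x = t + t' := by
      rw [hRpair]
      exact Finset.sum_pair htt'
    have hS : (∑ i : G, i) = (a + (b + ((b - a - a) + (b - a - b)))) + (t + t') := by
      rw [← hsumbad, ← hsumR, ← Finset.sum_sdiff (Finset.subset_univ bad), ← hRdef]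
      abel
    by_cases hS0 : (∑ i : G, i) = 0
    · -- S = 0 : derive b = 3a - iota, then analyse where 3a lives
      have hF1 : (a + (b + ((b - a - a) + (b - a - b)))) + (t + t') = 0 := by
        rw [← hS, hS0]
      have hbv : b = (a + a + a) - (t' - t) := by
        have e : b - ((a + a + a) - (t' - t)) =
            ((a + (b + ((b - a - a) + (b - a - b)))) + (t + t'))
              - ((t + t) - (b - a)) - (b + b) := by abel
        rw [hF1, sub_eq_zero_of_eq ht, hb] at e
        simp only [sub_zero, zero_sub, neg_zero] at e
        exact sub_eq_zero.mp e
      have hmem3 : (a + a + a) ∈ bad ∨ (a + a + a) ∈ R := by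
        by_cases h : (a + a + a) ∈ bad
        · exact Or.inl h
        · exact Or.inr (by rw [hRdef]; simp [h])
      rcases hmem3 with hm | hm
      · rw [hbaddef] at hm
        simp only [Finset.mem_insert, Finset.mem_singleton] at hm
        rcases hm with e | e | e | e
        · -- 3a = a
          apply h2a0
          have e' : (a + a) + a = 0 + a := by rw [zero_add]; exact e
          exact add_right_cancel e'
        · -- 3a = b : iota = 0
          apply hi0
          have e2 : t' - t = ((a + a + a) - b) + (b - ((a + a + a) - (t' - t))) := by
            abel
          rw [sub_eq_zero_of_eq e, sub_eq_zero_of_eq hbv, add_zero] at e2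
          exact e2
        · -- 3a = b - a - a : then 2a = -iota and b = a
          have h2ai : (a + a) + (t' - t) = 0 := by
            have e2 : (a + a) + (t' - t) =
                ((a + a + a) - (b - a - a)) + (b - ((a + a + a) - (t' - t))) := by abel
            rw [sub_eq_zero_of_eq e, sub_eq_zero_of_eq hbv, add_zero] at e2
            exact e2
          apply hab
          have e3 : b - a = (b - ((a + a + a) - (t' - t))) + ((a + a) + (t' - t))
              - ((t' - t) + (t' - t)) := by abel
          rw [sub_eq_zero_of_eq hbv, h2ai, hi2] at e3
          simp only [add_zero, zero_add, sub_zero, zero_sub, neg_zero] at e3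
          exact (sub_eq_zero.mp e3).symm
        · -- 3a = b - a - b : then 4a = 0, 2a = iota, b = a
          have h2a2 : (a + a) + (a + a) = 0 := by
            have e2 : (a + a) + (a + a) = (a + a + a) - (b - a - b) := by abel
            rw [sub_eq_zero_of_eq e] at e2
            exact e2
          have h2aeq : a + a = t' - t := hinv _ _ h2a0 h2a2 hi0 hi2
          apply hab
          have e3 : b - a = (b - ((a + a + a) - (t' - t))) + ((a + a) - (t' - t)) := by
            abel
          rw [sub_eq_zero_of_eq hbv, sub_eq_zero_of_eq h2aeq, add_zero] at e3
          exact (sub_eq_zero.mp e3).symm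
      · -- 3a ∈ R : then 4a = -iota, 8a = 0
        rw [hRpair] at hm
        simp only [Finset.mem_insert, Finset.mem_singleton] at hm
        have h4 : (a + a + a + a) + (t' - t) = 0 := by
          rcases hm with e | e
          · have e2 : (a + a + a + a) + (t' - t) =
                (((a + a + a) - t) + ((a + a + a) - t)) + ((t + t) - (b - a))
                  + (b - ((a + a + a) - (t' - t))) := by abel
            rw [sub_eq_zero_of_eq e, sub_eq_zero_of_eq ht, sub_eq_zero_of_eq hbv] at e2
            simpa using e2
          · have e2 : (a + a + a + a) + (t' - t) =
                (((a + a + a) - t') + ((a + a + a) - t')) + ((t' + t') - (b - a))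
                  + (b - ((a + a + a) - (t' - t))) := by abel
            rw [sub_eq_zero_of_eq e, sub_eq_zero_of_eq ht', sub_eq_zero_of_eq hbv] at e2
            simpa using e2
        have h8 : (8 : ℕ) • a = 0 := by
          have e2 : (8 : ℕ) • a = (((a + a + a + a) + (t' - t))
              + ((a + a + a + a) + (t' - t))) - ((t' - t) + (t' - t)) := by abel
          rw [h4, hi2] at e2
          simpa using e2
        have hdvd8 : addOrderOf a ∣ 8 := addOrderOf_dvd_iff_nsmul_eq_zero.mpr h8
        have hdvd6 : addOrderOf a ∣ 6 := hcard6 ▸ addOrderOf_dvd_card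
        have hdvd2 : addOrderOf a ∣ 2 :=
          (Nat.dvd_gcd hdvd8 hdvd6).trans (by norm_num)
        have h2 : (2 : ℕ) • a = 0 := addOrderOf_dvd_iff_nsmul_eq_zero.mp hdvd2
        rw [two_nsmul] at h2
        exact h2a0 h2
    · -- S ≠ 0 : S = iota, derive a = b - a - a
      have hSi : (∑ i : G, i) = t' - t := hinv _ _ hS0 hS2 hi0 hi2
      apply hdac
      have e : a - (b - a - a) =
          ((∑ i : G, i) - ((a + (b + ((b - a - a) + (b - a - b)))) + (t + t')))
            - ((∑ i : G, i) - (t' - t)) + ((t + t) - (b - a)) + (b + b) := by abel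
      rw [sub_eq_zero_of_eq hS, sub_eq_zero_of_eq hSi, sub_eq_zero_of_eq ht, hb] at e
      simp only [sub_zero, zero_sub, neg_zero, add_zero, zero_add] at e
      exact sub_eq_zero.mp e

  obtain ⟨x, hxbad, hx2⟩ := key
  simp only [Finset.mem_insert, Finset.mem_singleton, not_or] at hxbad
  obtain ⟨hxa, hxb, hxc, hxd⟩ := hxbad
  refine ⟨x, b - a - x, ?_, ?_, by abel⟩
  · intro h
    exact hx2 ((eq_sub_iff_add_eq.mp h))
  · rw [Set.eq_empty_iff_forall_notMem]
    rintro z ⟨hz1, hz2⟩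
    simp only [Set.mem_insert_iff, Set.mem_singleton_iff] at hz1 hz2
    rcases hz1 with h1 | h1 <;> rcases hz2 with h2 | h2
    · exact hxa (h2.symm.trans h1)
    · have h3 : b - a - x = a := h2.symm.trans h1
      have := congrArg (fun w => b - a - w) h3
      simp only [sub_sub_cancel] at this
      exact hxc this
    · exact hxb (h2.symm.trans h1)
    · have h3 : b - a - x = b := h2.symm.trans h1
      have := congrArg (fun w => b - a - w) h3
      simp only [sub_sub_cancel] at this
      exact hxd this
end

section
/- Let 𝒢 be a finite Abelian group whose set of involutions is I* = {ι_1, …, ι_{2^k − 1}} with k ≥ 2 (i.e. 𝒢 has exactly 2^k − 1 involutions), and let I = I* ∪ {0}. Given an element ι ∈ I* and positive integers n_1, n_2 with n_1 + n_2 = 2^k, n_1 ≠ 2 and n_2 ≥ 3, there exists a partition {A_1, A_2} of I such that |A_1| = n_1, |A_2| = n_2, Σ_{a ∈ A_1} a = 0, Σ_{a ∈ A_2} a = 0, and ι ∉ A_1. -/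
open Finset

variable {G : Type} [AddCommGroup G] [Fintype G] [DecidableEq G]

lemma my_exists_notMem {s t : Finset G} (h : s.card < t.card) : ∃ y ∈ t, y ∉ s := by
  by_contra hc
  push_neg at hc
  exact absurd (Finset.card_le_card hc) (by omega)

omit [Fintype G] [DecidableEq G] in
lemma my_mem_H_add {H : Finset G} (hmem : ∀ g, g ∈ H ↔ g + g = 0) {a b : G}
    (ha : a ∈ H) (hb : b ∈ H) : a + b ∈ H := by
  rw [hmem] at *
  rw [show a + b + (a + b) = (a + a) + (b + b) by abel, ha, hb, add_zero]


omit [Fintype G] [DecidableEq G] in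
lemma my_cancel_left {a b c : G} (ha : a + a = 0) (h : a + b = c) : b = a + c := by
  rw [← h, ← add_assoc, ha, zero_add]

/-- Growth lemma for `A₁`: zero-sum subsets of every size `3 ≤ M` with `2M+2 ≤ 2^k`,
avoiding `ι`. -/
lemma my_grow1 (k : ℕ) {H : Finset G} (hmem : ∀ g, g ∈ H ↔ g + g = 0)
    (hcard : H.card = 2 ^ k) (ι : G) (hι0 : ι ≠ 0)
    (M : ℕ) (hM3 : 3 ≤ M) (hMb : 2 * M + 2 ≤ 2 ^ k) :
    ∃ A : Finset G, A ⊆ H ∧ A.card = M ∧ ∑ a ∈ A, a = 0 ∧ ι ∉ A ∧ ∃ x ∈ A, x ≠ 0 := by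
  induction M, hM3 using Nat.le_induction with
  | base =>
    -- pick a ∈ H \ {0, ι}
    obtain ⟨a, haH, ha⟩ := my_exists_notMem (s := {0, ι}) (t := H)
      (lt_of_le_of_lt (Finset.card_insert_le _ _) (by simp; omega))
    simp only [mem_insert, mem_singleton, not_or] at ha
    obtain ⟨ha0, haι⟩ := ha
    obtain ⟨b, hbH, hb⟩ := my_exists_notMem (s := {0, a, ι, a + ι}) (t := H)
      (lt_of_le_of_lt (by
        calc ({0, a, ι, a+ι} : Finset G).card ≤ _ := Finset.card_insert_le _ _
        _ ≤ _ := Nat.succ_le_succ (Finset.card_insert_le _ _)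
        _ ≤ _ := Nat.succ_le_succ (Nat.succ_le_succ (Finset.card_insert_le _ _))
        _ ≤ 4 := by simp) (by omega))
    simp only [mem_insert, mem_singleton, not_or] at hb
    obtain ⟨hb0, hba', hbι, hbaι'⟩ := hb
    have hba : b ≠ a := hba'
    have hab : a ≠ b := hba.symm
    have hbaι : b ≠ a + ι := hbaι'
    have ha2 : a + a = 0 := (hmem a).1 haH
    have hb2 : b + b = 0 := (hmem b).1 hbH
    have habH : a + b ∈ H := my_mem_H_add hmem haH hbH
    have hab0 : a + b ≠ 0 := fun h => hba (by
      have := my_cancel_left ha2 h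
      rwa [add_zero] at this)
    have haba : a + b ≠ a := fun h => hb0 (by simpa using congrArg (·  - a) h)
    have habb : a + b ≠ b := fun h => ha0 (by simpa using congrArg (· - b) h)
    have habι : a + b ≠ ι := fun h => hbaι (my_cancel_left ha2 h)
    refine ⟨{a, b, a + b}, ?_, ?_, ?_, ?_, ⟨a, by simp, ha0⟩⟩
    · intro g hg
      simp only [mem_insert, mem_singleton] at hg
      rcases hg with rfl | rfl | rfl <;> assumption
    · rw [Finset.card_insert_of_notMem (by simp [hab, Ne.symm haba]),
        Finset.card_insert_of_notMem (by simp [Ne.symm habb]), Finset.card_singleton]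
    · rw [Finset.sum_insert (by simp [hab, Ne.symm haba]),
        Finset.sum_insert (by simp [Ne.symm habb]), Finset.sum_singleton]
      rw [show a + (b + (a + b)) = (a + a) + (b + b) by abel, ha2, hb2, add_zero]
    · simp only [mem_insert, mem_singleton, not_or]
      exact ⟨fun h => haι h.symm, fun h => hbι h.symm, fun h => habι h.symm⟩
  | succ m hm ih =>
    obtain ⟨A, hAH, hcardA, hsumA, hιA, x, hxA, hx0⟩ := ih (by omega)
    have hx2 : x + x = 0 := (hmem x).1 (hAH hxA)
    set B : Finset G := (A ∪ A.image (fun a => x + a)) ∪ {0, ι, x + ι} with hB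
    have hBcard : B.card < 2 ^ k := by
      calc B.card ≤ (A ∪ A.image (fun a => x + a)).card + ({0, ι, x + ι} : Finset G).card :=
            Finset.card_union_le _ _
        _ ≤ (A.card + (A.image (fun a => x + a)).card) + 3 := by
            gcongr
            · exact Finset.card_union_le _ _
            · calc ({0, ι, x+ι} : Finset G).card ≤ _ := Finset.card_insert_le _ _
                _ ≤ _ := Nat.succ_le_succ (Finset.card_insert_le _ _)
                _ ≤ 3 := by simp
        _ ≤ (m + m) + 3 := by
            gcongr
            · omega
            · exact le_trans (Finset.card_image_le) (by omega)
        _ < 2 ^ k := by omega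
    obtain ⟨y, hyH, hyB⟩ := my_exists_notMem (by omega : B.card < H.card)
    simp only [hB, Finset.mem_union, Finset.mem_image, mem_insert, mem_singleton,
      not_or, not_exists] at hyB
    push_neg at hyB
    obtain ⟨⟨hyA, hyim⟩, hy0, hyι, hyxι⟩ := hyB
    have hy2 : y + y = 0 := (hmem y).1 hyH
    have hxyH : x + y ∈ H := my_mem_H_add hmem (hAH hxA) hyH
    have hxyA : x + y ∉ A := fun h => hyim (x + y) h (by
      rw [← add_assoc, hx2, zero_add])
    have hxyy : x + y ≠ y := fun h => hx0 (by simpa using congrArg (· - y) h)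
    have hxy0 : x + y ≠ 0 := fun h => hyA (by
      have : y = x := by have := my_cancel_left hx2 h; rwa [add_zero] at this
      rw [this]; exact hxA)
    have hxyι : x + y ≠ ι := fun h => hyxι (my_cancel_left hx2 h)
    refine ⟨insert y (insert (x + y) (A.erase x)), ?_, ?_, ?_, ?_, ⟨y, by simp, hy0⟩⟩
    · intro g hg
      simp only [mem_insert] at hg
      rcases hg with rfl | rfl | hg
      · exact hyH
      · exact hxyH
      · exact hAH (Finset.mem_of_mem_erase hg)
    · rw [Finset.card_insert_of_notMem, Finset.card_insert_of_notMem,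
        Finset.card_erase_of_mem hxA, hcardA]
      · omega
      · exact fun h => hxyA (Finset.mem_of_mem_erase h)
      · simp only [mem_insert, not_or]
        exact ⟨fun h => hxyy h.symm, fun h => hyA (Finset.mem_of_mem_erase h)⟩
    · rw [Finset.sum_insert, Finset.sum_insert, Finset.sum_erase_eq_sub hxA, hsumA]
      · rw [show y + (x + y + (0 - x)) = (y + y) + (x - x) by abel, hy2, sub_self, add_zero]
      · exact fun h => hxyA (Finset.mem_of_mem_erase h)
      · simp only [mem_insert, not_or]
        exact ⟨fun h => hxyy h.symm, fun h => hyA (Finset.mem_of_mem_erase h)⟩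
    · simp only [mem_insert, not_or]
      exact ⟨fun h => hyι h.symm, fun h => hxyι h.symm,
        fun h => hιA (Finset.mem_of_mem_erase h)⟩

/-- Growth lemma for `A₂`: zero-sum subsets of every size `3 ≤ M` with `2M ≤ 2^k`,
containing `ι`. -/
lemma my_grow2 (k : ℕ) {H : Finset G} (hmem : ∀ g, g ∈ H ↔ g + g = 0)
    (hcard : H.card = 2 ^ k) (ι : G) (hι0 : ι ≠ 0) (hι2 : ι + ι = 0)
    (M : ℕ) (hM3 : 3 ≤ M) (hMb : 2 * M ≤ 2 ^ k) :
    ∃ A : Finset G, A ⊆ H ∧ A.card = M ∧ ∑ a ∈ A, a = 0 ∧ ι ∈ A ∧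
      ∃ x ∈ A, x ≠ 0 ∧ x ≠ ι := by
  have hιH : ι ∈ H := (hmem ι).2 hι2
  induction M, hM3 using Nat.le_induction with
  | base =>
    obtain ⟨b, hbH, hb⟩ := my_exists_notMem (s := {0, ι}) (t := H)
      (lt_of_le_of_lt (Finset.card_insert_le _ _) (by simp; omega))
    simp only [mem_insert, mem_singleton, not_or] at hb
    obtain ⟨hb0', hbι'⟩ := hb
    have hb0 : b ≠ 0 := hb0'
    have hbι : b ≠ ι := hbι'
    have hιb : ι ≠ b := hbι.symm
    have hb2 : b + b = 0 := (hmem b).1 hbH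
    have hιbH : ι + b ∈ H := my_mem_H_add hmem hιH hbH
    have hιb0 : ι + b ≠ 0 := fun h => hbι (by
      have := my_cancel_left hι2 h
      rwa [add_zero] at this)
    have hιbι : ι + b ≠ ι := fun h => hb0 (by simpa using congrArg (· - ι) h)
    have hιbb : ι + b ≠ b := fun h => hι0 (by simpa using congrArg (· - b) h)
    refine ⟨{ι, b, ι + b}, ?_, ?_, ?_, by simp, ⟨b, by simp, hb0, hbι⟩⟩
    · intro g hg
      simp only [mem_insert, mem_singleton] at hg
      rcases hg with rfl | rfl | rfl <;> assumption
    · rw [Finset.card_insert_of_notMem (by simp [hιb, Ne.symm hιbι]),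
        Finset.card_insert_of_notMem (by simp [Ne.symm hιbb]), Finset.card_singleton]
    · rw [Finset.sum_insert (by simp [hιb, Ne.symm hιbι]),
        Finset.sum_insert (by simp [Ne.symm hιbb]), Finset.sum_singleton]
      rw [show ι + (b + (ι + b)) = (ι + ι) + (b + b) by abel, hι2, hb2, add_zero]
  | succ m hm ih =>
    obtain ⟨A, hAH, hcardA, hsumA, hιA, x, hxA, hx0, hxι⟩ := ih (by omega)
    have hx2 : x + x = 0 := (hmem x).1 (hAH hxA)
    set B : Finset G := (A ∪ (A.erase x).image (fun a => x + a)) ∪ {0} with hB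
    have hBcard : B.card < 2 ^ k := by
      calc B.card ≤ (A ∪ (A.erase x).image (fun a => x + a)).card + 1 := by
            apply le_trans (Finset.card_union_le _ _); simp
        _ ≤ (A.card + ((A.erase x).image (fun a => x + a)).card) + 1 := by
            gcongr; exact Finset.card_union_le _ _
        _ ≤ (m + (m - 1)) + 1 := by
            gcongr
            · omega
            · exact le_trans Finset.card_image_le (by rw [Finset.card_erase_of_mem hxA]; omega)
        _ < 2 ^ k := by omega
    obtain ⟨y, hyH, hyB⟩ := my_exists_notMem (by omega : B.card < H.card)
    simp only [hB, Finset.mem_union, Finset.mem_image, mem_singleton, not_or, not_exists] at hyB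
    push_neg at hyB
    obtain ⟨⟨hyA, hyim⟩, hy0⟩ := hyB
    have hy2 : y + y = 0 := (hmem y).1 hyH
    have hxyH : x + y ∈ H := my_mem_H_add hmem (hAH hxA) hyH
    have hxyx : x + y ≠ x := fun h => hy0 (by simpa using congrArg (· - x) h)
    have hxyA' : x + y ∉ A.erase x := fun h => hyim (x + y) h (by
      rw [← add_assoc, hx2, zero_add])
    have hxyy : x + y ≠ y := fun h => hx0 (by simpa using congrArg (· - y) h)
    have hxy0 : x + y ≠ 0 := fun h => hyA (by
      have : y = x := by have := my_cancel_left hx2 h; rwa [add_zero] at this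
      rw [this]; exact hxA)
    have hyι : y ≠ ι := fun h => hyA (h ▸ hιA)
    refine ⟨insert y (insert (x + y) (A.erase x)), ?_, ?_, ?_, ?_, ⟨y, by simp, hy0, hyι⟩⟩
    · intro g hg
      simp only [mem_insert] at hg
      rcases hg with rfl | rfl | hg
      · exact hyH
      · exact hxyH
      · exact hAH (Finset.mem_of_mem_erase hg)
    · rw [Finset.card_insert_of_notMem, Finset.card_insert_of_notMem hxyA',
        Finset.card_erase_of_mem hxA, hcardA]
      · omega
      · simp only [mem_insert, not_or]
        exact ⟨fun h => hxyy h.symm, fun h => hyA (Finset.mem_of_mem_erase h)⟩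
    · rw [Finset.sum_insert, Finset.sum_insert hxyA', Finset.sum_erase_eq_sub hxA, hsumA]
      · rw [show y + (x + y + (0 - x)) = (y + y) + (x - x) by abel, hy2, sub_self, add_zero]
      · simp only [mem_insert, not_or]
        exact ⟨fun h => hxyy h.symm, fun h => hyA (Finset.mem_of_mem_erase h)⟩
    · simp only [mem_insert]
      exact Or.inr (Or.inr (Finset.mem_erase.2 ⟨fun h => hxι h.symm, hιA⟩))
lemma my_sum_H_zero (k : ℕ) (hk : 2 ≤ k) {H : Finset G}
    (hmem : ∀ g, g ∈ H ↔ g + g = 0) (hcard : H.card = 2 ^ k)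
    (ι : G) (hι0 : ι ≠ 0) (hι2 : ι + ι = 0) :
    ∑ g ∈ H, g = 0 := by
  classical
  set π : G → Finset G := fun g => {g, g + ι} with hπ
  have hιH : ι ∈ H := (hmem ι).2 hι2
  have hfiber : ∀ x ∈ H, H.filter (fun g => π g = π x) = {x, x + ι} := by
    intro x hx
    have hx2 : x + x = 0 := (hmem x).1 hx
    ext g
    simp only [mem_filter, mem_insert, mem_singleton]
    constructor
    · rintro ⟨hg, hgx⟩
      have hgg : g ∈ π g := by simp [hπ]
      rw [hgx] at hgg
      simpa [hπ] using hgg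
    · rintro (rfl | rfl)
      · exact ⟨hx, rfl⟩
      · refine ⟨my_mem_H_add hmem hx hιH, ?_⟩
        have : x + ι + ι = x := by rw [add_assoc, hι2, add_zero]
        simp only [hπ, this]
        exact Finset.pair_comm _ _
  have hne : ∀ x : G, x ≠ x + ι := by
    intro x h
    exact hι0 (by simpa using h.symm)
  have hmaps : ∀ x ∈ H, π x ∈ H.image π := fun x hx => mem_image_of_mem _ hx
  have hsum := Finset.sum_fiberwise_of_maps_to hmaps (fun g => g)
  rw [← hsum]
  have hfib2 : ∀ b ∈ H.image π, ∑ g ∈ H.filter (fun g => π g = b), g = ι := by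
    intro b hb
    obtain ⟨x, hx, rfl⟩ := mem_image.1 hb
    rw [hfiber x hx, Finset.sum_pair (hne x)]
    have hx2 : x + x = 0 := (hmem x).1 hx
    rw [show x + (x + ι) = (x + x) + ι by abel, hx2, zero_add]
  rw [Finset.sum_congr rfl hfib2, Finset.sum_const]
  -- card of image is 2^(k-1)
  have hcards := Finset.card_eq_sum_card_fiberwise hmaps
  have hfibcard : ∀ b ∈ H.image π, (H.filter (fun g => π g = b)).card = 2 := by
    intro b hb
    obtain ⟨x, hx, rfl⟩ := mem_image.1 hb
    rw [hfiber x hx, Finset.card_pair (hne x)]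
  rw [Finset.sum_congr rfl hfibcard, Finset.sum_const, smul_eq_mul] at hcards
  obtain ⟨j, rfl⟩ := Nat.exists_eq_add_of_le hk
  have h2 : (H.image π).card = 2 ^ (1 + j) := by
    have : (2:ℕ) ^ (2 + j) = 2 ^ (1+j) * 2 := by ring
    omega
  rw [h2, show (2:ℕ)^(1+j) = 2^j * 2 by ring, mul_smul]
  have : (2:ℕ) • ι = 0 := by rw [two_smul]; exact hι2
  rw [this, smul_zero]

/-- Let `𝒢` be an Abelian group with exactly `2^k - 1` involutions, `k ≥ 2`, and let
`I` be the set of its elements of order at most `2`.  Given an involution `ι` and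
positive integers `n₁, n₂` with `n₁ + n₂ = 2^k`, `n₁ ≠ 2` and `n₂ ≥ 3`, there is a
partition `{A₁, A₂}` of `I` with `|A₁| = n₁`, `|A₂| = n₂`, both zero-sum, and
`ι ∉ A₁`. -/
theorem exists_zero_sum_partition {G : Type} [AddCommGroup G] [Fintype G] [DecidableEq G]
    (k : ℕ) (hk : 2 ≤ k)
    (hinv : (Finset.univ.filter (fun g : G => g ≠ 0 ∧ g + g = 0)).card = 2 ^ k - 1)
    (ι : G) (hι : ι ≠ 0 ∧ ι + ι = 0)
    (n₁ n₂ : ℕ) (hn₁pos : 0 < n₁) (hn₂pos : 0 < n₂)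
    (hsum : n₁ + n₂ = 2 ^ k) (hn₁ : n₁ ≠ 2) (hn₂ : 3 ≤ n₂) :
    ∃ A₁ A₂ : Finset G,
      Disjoint A₁ A₂ ∧
      A₁ ∪ A₂ = Finset.univ.filter (fun g : G => g + g = 0) ∧
      A₁.card = n₁ ∧ A₂.card = n₂ ∧
      ∑ a ∈ A₁, a = 0 ∧ ∑ a ∈ A₂, a = 0 ∧ ι ∉ A₁ := by
  classical
  obtain ⟨hι0, hι2⟩ := hι
  set H : Finset G := Finset.univ.filter (fun g : G => g + g = 0) with hHdef
  have hmem : ∀ g, g ∈ H ↔ g + g = 0 := fun g => by simp [hHdef]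
  have h2k1 : 1 ≤ 2 ^ k := Nat.one_le_two_pow
  have hcard : H.card = 2 ^ k := by
    have hHeq : H = insert 0 (Finset.univ.filter (fun g : G => g ≠ 0 ∧ g + g = 0)) := by
      ext g
      simp only [hHdef, mem_filter, mem_univ, true_and, mem_insert]
      by_cases hg : g = 0
      · subst hg; simp
      · simp [hg]
    rw [hHeq, Finset.card_insert_of_notMem (by simp), hinv]
    omega
  have hιH : ι ∈ H := (hmem ι).2 hι2
  have hS : ∑ g ∈ H, g = 0 := my_sum_H_zero k hk hmem hcard ι hι0 hι2
  have h2keven : 2 ^ k = 2 * 2 ^ (k - 1) := by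
    rw [← pow_succ']
    congr 1
    omega
  by_cases h1 : n₁ = 1
  · -- A₁ = {0}
    refine ⟨{0}, H.erase 0, ?_, ?_, ?_, ?_, ?_, ?_, ?_⟩
    · simp [Finset.disjoint_left]
    · have h0H : (0:G) ∈ H := (hmem 0).2 (by simp)
      ext g
      simp only [Finset.mem_union, Finset.mem_singleton, Finset.mem_erase]
      constructor
      · rintro (rfl | ⟨-, hg⟩)
        · exact h0H
        · exact hg
      · intro hg
        by_cases hg0 : g = 0
        · exact Or.inl hg0
        · exact Or.inr ⟨hg0, hg⟩
    · simp [h1]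
    · rw [Finset.card_erase_of_mem ((hmem 0).2 (by simp)), hcard]
      omega
    · simp
    · rw [Finset.sum_erase H rfl]
      exact hS
    · simp [hι0]
  · have h3 : 3 ≤ n₁ := by omega
    by_cases hsmall : 2 * n₁ + 2 ≤ 2 ^ k
    · obtain ⟨A, hAH, hAcard, hAsum, hAι, -⟩ :=
        my_grow1 k hmem hcard ι hι0 n₁ h3 hsmall
      refine ⟨A, H \ A, Finset.disjoint_sdiff, Finset.union_sdiff_of_subset hAH,
        hAcard, ?_, hAsum, ?_, hAι⟩
      · rw [Finset.card_sdiff_of_subset hAH, hcard, hAcard]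
        omega
      · have := Finset.sum_sdiff (f := fun a : G => a) hAH
        rw [hAsum, add_zero] at this
        rw [this, hS]
    · -- build A₂ containing ι
      have hb2 : 2 * n₂ ≤ 2 ^ k := by omega
      obtain ⟨A, hAH, hAcard, hAsum, hAι, -⟩ :=
        my_grow2 k hmem hcard ι hι0 hι2 n₂ hn₂ hb2
      refine ⟨H \ A, A, Finset.sdiff_disjoint, Finset.sdiff_union_of_subset hAH,
        ?_, hAcard, ?_, hAsum, ?_⟩
      · rw [Finset.card_sdiff_of_subset hAH, hcard, hAcard]
        omega
      · have := Finset.sum_sdiff (f := fun a : G => a) hAH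
        rw [hAsum, add_zero] at this
        rw [this, hS]
      · simp [Finset.mem_sdiff, hAι]
end
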